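/- arXiv:2501.01380 — 9 statements merged into one kernel-verified Lean document; each statement's English description precedes it below -/
import Mathlib

section
/- For fixed natural numbers r, t ≥ 0 with r + t ≥ 1, and for all positive reals n and y, one has 1/(n^r (n+y)^t) = (-1)^r * Σ_{j=0}^{t-1} C(j+r-1, j) / (y^{j+r} (n+y)^{t-j}) + Σ_{i=0}^{r-1} C(i+t-1, i) * (-1)^i / (n^{r-i} y^{t+i}), with the conventions C(-1,0)=1 and C(c,-1)=0 for c ≠ -1. -/
/-! Both sides `F r t` of the identity satisfy `y F (r+1) (t+1) = F (r+1) t - F r (t+1)`: for the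
left side because `(x + y) - x = y`, for the right side by Pascal's rule. They also agree on the
boundary `r = 0` or `t = 0`, where the right side collapses to a single term. -/

open Real

/-- Binomial coefficient on integers with the conventions `C(-1,0) = 1`,
`C(c,-1) = 0` for `c ≠ -1`, and `C(-1,-1) = 1`. -/
noncomputable def binomC (a b : ℤ) : ℝ :=
  if a = -1 ∧ (b = -1 ∨ b = 0) then 1
  else if b < 0 ∨ a < 0 then 0
  else (a.toNat.choose b.toNat : ℝ)

/-- The truncated subtraction makes `k = m = 0` give `Nat.choose 0 0 = 1`, matching
`C(-1,0) = 1`. -/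
lemma binomC_eq_choose (k m : ℕ) :
    binomC ((k : ℤ) + m - 1) k = ((k + m - 1).choose k : ℝ) := by
  unfold binomC
  rcases Nat.eq_zero_or_pos (k + m) with h | h
  · obtain ⟨rfl, rfl⟩ := Nat.add_eq_zero_iff.mp h
    norm_num
  · rw [if_neg (by omega), if_neg (by omega), show ((k : ℤ) + m - 1).toNat = k + m - 1 by omega,
      Int.toNat_natCast]

theorem eq_of_grid_recurrence {α : Type*} (Φ : α → α → α) {f g : ℕ → ℕ → α}
    (hf : ∀ r t, f (r + 1) (t + 1) = Φ (f (r + 1) t) (f r (t + 1)))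
    (hg : ∀ r t, g (r + 1) (t + 1) = Φ (g (r + 1) t) (g r (t + 1)))
    (h_left : ∀ t, f 0 (t + 1) = g 0 (t + 1)) (h_bottom : ∀ r, f (r + 1) 0 = g (r + 1) 0)
    {r t : ℕ} (hrt : 1 ≤ r + t) : f r t = g r t := by
  induction r generalizing t with
  | zero =>
    obtain ⟨s, rfl⟩ : ∃ s, t = s + 1 := ⟨t - 1, by omega⟩
    exact h_left s
  | succ r ih =>
    induction t with
    | zero => exact h_bottom r
    | succ t iht => rw [hf, hg, iht (by omega), ih (by omega)]

namespace PartialFraction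

variable {K : Type*} [Field K] (x y : K)

/-- The principal part of `x ↦ 1 / (x ^ r * (x + y) ^ t)` at the pole `x = -y`. -/
def principalPartAtNeg (r t : ℕ) : K :=
  (-1) ^ r *
    ∑ j ∈ Finset.range t, ((j + r - 1).choose j : K) / (y ^ (j + r) * (x + y) ^ (t - j))

/-- The principal part of `x ↦ 1 / (x ^ r * (x + y) ^ t)` at the pole `x = 0`. -/
def principalPartAtZero (r t : ℕ) : K :=
  ∑ i ∈ Finset.range r, ((i + t - 1).choose i : K) * (-1) ^ i / (x ^ (r - i) * y ^ (t + i))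

variable {x y}

lemma principalPartAtNeg_succ_succ (hy : y ≠ 0) (r t : ℕ) :
    principalPartAtNeg x y (r + 1) (t + 1) =
      (principalPartAtNeg x y (r + 1) t - principalPartAtNeg x y r (t + 1)) / y := by
  have pascal : y * ∑ j ∈ Finset.range (t + 1),
        ((j + (r + 1) - 1).choose j : K) / (y ^ (j + (r + 1)) * (x + y) ^ (t + 1 - j)) =
      ∑ j ∈ Finset.range t,
        ((j + (r + 1) - 1).choose j : K) / (y ^ (j + (r + 1)) * (x + y) ^ (t - j)) +
      ∑ j ∈ Finset.range (t + 1),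
        ((j + r - 1).choose j : K) / (y ^ (j + r) * (x + y) ^ (t + 1 - j)) := by
    rw [Finset.mul_sum, Finset.sum_range_succ', Finset.sum_range_succ' _ t,
      ← add_assoc (Finset.sum _ _), ← Finset.sum_add_distrib]
    congr 1
    · refine Finset.sum_congr rfl fun j _ => ?_
      rw [show j + 1 + (r + 1) - 1 = (j + r) + 1 by omega, Nat.choose_succ_succ',
        show j + (r + 1) - 1 = j + r by omega, show j + 1 + r - 1 = j + r by omega,
        show t + 1 - (j + 1) = t - j by omega]
      push_cast
      field_simp
      ring
    · simp only [Nat.choose_zero_right, Nat.cast_one, zero_add, Nat.add_sub_cancel]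
      field_simp
      ring
  unfold principalPartAtNeg
  rw [eq_div_iff hy]
  linear_combination (-1 : K) ^ (r + 1) * pascal

lemma principalPartAtZero_succ_succ (hy : y ≠ 0) (r t : ℕ) :
    principalPartAtZero x y (r + 1) (t + 1) =
      (principalPartAtZero x y (r + 1) t - principalPartAtZero x y r (t + 1)) / y := by
  unfold principalPartAtZero
  rw [eq_div_iff hy, mul_comm, Finset.mul_sum, Finset.sum_range_succ', Finset.sum_range_succ' _ r,
    add_sub_right_comm, ← Finset.sum_sub_distrib]
  congr 1
  · refine Finset.sum_congr rfl fun i _ => ?_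
    rw [show i + 1 + (t + 1) - 1 = (i + t) + 1 by omega, Nat.choose_succ_succ',
      show i + (t + 1) - 1 = i + t by omega, show i + 1 + t - 1 = i + t by omega,
      show r + 1 - (i + 1) = r - i by omega]
    push_cast
    field_simp
    ring
  · simp only [Nat.choose_zero_right, Nat.cast_one, pow_zero, mul_one, Nat.sub_zero, add_zero]
    field_simp
    ring

lemma principalPartAtNeg_zero_left (t : ℕ) :
    principalPartAtNeg x y 0 (t + 1) = 1 / (x + y) ^ (t + 1) := by
  rw [principalPartAtNeg, Finset.sum_range_succ']
  simp [Nat.choose_succ_self]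

lemma principalPartAtZero_zero_right (r : ℕ) :
    principalPartAtZero x y (r + 1) 0 = 1 / x ^ (r + 1) := by
  rw [principalPartAtZero, Finset.sum_range_succ']
  simp [Nat.choose_succ_self]

theorem one_div_pow_mul_pow_eq (hx : x ≠ 0) (hy : y ≠ 0) (hxy : x + y ≠ 0) {r t : ℕ}
    (hrt : 1 ≤ r + t) :
    1 / (x ^ r * (x + y) ^ t) = principalPartAtNeg x y r t + principalPartAtZero x y r t := by
  refine eq_of_grid_recurrence (fun a b => (a - b) / y)
    (f := fun r t => 1 / (x ^ r * (x + y) ^ t))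
    (g := fun r t => principalPartAtNeg x y r t + principalPartAtZero x y r t)
    (fun r t => ?_) (fun r t => ?_) (fun t => ?_) (fun r => ?_) hrt
  · field_simp
    ring
  · rw [principalPartAtNeg_succ_succ hy, principalPartAtZero_succ_succ hy]
    ring
  · simp [principalPartAtNeg_zero_left, principalPartAtZero]
  · simp [principalPartAtNeg, principalPartAtZero_zero_right]

end PartialFraction

theorem partial_fraction (r t : ℕ) (hrt : 1 ≤ r + t) (n y : ℝ) (hn : 0 < n) (hy : 0 < y) :
    1 / (n ^ r * (n + y) ^ t) =
      (-1 : ℝ) ^ r *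
        ∑ j ∈ Finset.range t, binomC ((j : ℤ) + r - 1) j / (y ^ (j + r) * (n + y) ^ (t - j))
      + ∑ i ∈ Finset.range r,
          binomC ((i : ℤ) + t - 1) i * (-1 : ℝ) ^ i / (n ^ (r - i) * y ^ (t + i)) := by
  simp only [binomC_eq_choose]
  exact PartialFraction.one_div_pow_mul_pow_eq hn.ne' hy.ne' (by positivity) hrt
end

section
/- For real numbers r, s, t with r+s+t > 2, r+t > 1, s+t > 1, and for any natural number n and any x > 0, one has Θ(r,s,t,x) = Σ_{ℓ=0}^{n} C(n,ℓ) x^ℓ Θ(r-n+ℓ, s-ℓ, t+n, x). -/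
/-! Expanding `(j + k x)^n` by the binomial theorem splits each summand `j^-r k^-s (j + k x)^-t`
of `Θ(r,s,t,x)` into the corresponding summands of the `n + 1` shifted series, which satisfy the
convergence conditions again. Exchanging the finite sum with the double series is justified by
absolute convergence, which follows from a bound `j^r k^s (j + k x)^t ≥ c j^a k^b` with
`a, b > 1`: for `t ≤ 0` use `j + k x ≤ j k (1 + x)`, for `t > 0` split `t = t₁ + t₂` into
nonnegative parts with `r + t₁ > 1`, `s + t₂ > 1` and use `(j + k x)^t ≥ j^t₁ (k x)^t₂`. -/

open Real

noncomputable def Theta (r s t x : ℝ) : ℝ :=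
  ∑' n : ℕ, ∑' m : ℕ,
    1 / (((n : ℝ) + 1) ^ r * ((m : ℝ) + 1) ^ s * (((n : ℝ) + 1) + ((m : ℝ) + 1) * x) ^ t)

noncomputable def thetaTerm (r s t x : ℝ) (p : ℕ × ℕ) : ℝ :=
  1 / (((p.1 : ℝ) + 1) ^ r * ((p.2 : ℝ) + 1) ^ s * (((p.1 : ℝ) + 1) + ((p.2 : ℝ) + 1) * x) ^ t)

lemma one_div_rpow_mul_eq_sum_choose {u w x : ℝ} (hu : 0 < u) (hw : 0 < w) (hv : 0 < u + w * x)
    (r s t : ℝ) (n : ℕ) :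
    1 / (u ^ r * w ^ s * (u + w * x) ^ t) = ∑ ℓ ∈ Finset.range (n + 1),
      (n.choose ℓ : ℝ) * x ^ ℓ * (1 / (u ^ (r - n + ℓ) * w ^ (s - ℓ) * (u + w * x) ^ (t + n))) := by
  have summand (ℓ : ℕ) (hℓ : ℓ ∈ Finset.range (n + 1)) :
      (n.choose ℓ : ℝ) * x ^ ℓ * (1 / (u ^ (r - n + ℓ) * w ^ (s - ℓ) * (u + w * x) ^ (t + n)))
        = (w * x) ^ ℓ * u ^ (n - ℓ) * n.choose ℓ
          / (u ^ r * w ^ s * (u + w * x) ^ t * (u + w * x) ^ n) := by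
    rw [rpow_add hu, rpow_sub hu, rpow_sub hw, rpow_add hv, rpow_natCast, rpow_natCast,
      rpow_natCast, rpow_natCast,
      pow_sub₀ u hu.ne' (Nat.lt_succ_iff.mp (Finset.mem_range.mp hℓ))]
    have := rpow_pos_of_pos hu r
    have := rpow_pos_of_pos hw s
    have := rpow_pos_of_pos hv t
    field_simp
    ring
  rw [Finset.sum_congr rfl summand, ← Finset.sum_div, ← add_pow, add_comm (w * x),
    div_mul_cancel_right₀ (pow_pos hv n).ne', one_div]

lemma thetaTerm_eq_sum_choose (r s t : ℝ) (n : ℕ) {x : ℝ} (hx : 0 < x) (p : ℕ × ℕ) :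
    thetaTerm r s t x p = ∑ ℓ ∈ Finset.range (n + 1),
      (n.choose ℓ : ℝ) * x ^ ℓ * thetaTerm (r - n + ℓ) (s - ℓ) (t + n) x p :=
  one_div_rpow_mul_eq_sum_choose (by positivity) (by positivity) (by positivity) r s t n

lemma exists_split_of_pos {r s t : ℝ} (h1 : 2 < r + s + t) (h2 : 1 < r + t) (h3 : 1 < s + t)
    (ht : 0 < t) : ∃ t₁ t₂ : ℝ, 0 ≤ t₁ ∧ 0 ≤ t₂ ∧ t₁ + t₂ = t ∧ 1 < r + t₁ ∧ 1 < s + t₂ := by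
  obtain ⟨t₁, hlo, hhi⟩ : ∃ t₁, max 0 (1 - r) < t₁ ∧ t₁ < min t (s + t - 1) :=
    exists_between <| by
      simp only [lt_min_iff, max_lt_iff]
      exact ⟨⟨ht, by linarith⟩, by linarith, by linarith⟩
  rw [max_lt_iff] at hlo
  rw [lt_min_iff] at hhi
  exact ⟨t₁, t - t₁, hlo.1.le, by linarith, by ring, by linarith, by linarith⟩

lemma exists_mul_rpow_le {r s t x : ℝ} (h1 : 2 < r + s + t) (h2 : 1 < r + t) (h3 : 1 < s + t)
    (hx : 0 < x) : ∃ a b c : ℝ, 1 < a ∧ 1 < b ∧ 0 < c ∧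
      ∀ u w : ℝ, 1 ≤ u → 1 ≤ w → c * u ^ a * w ^ b ≤ u ^ r * w ^ s * (u + w * x) ^ t := by
  rcases le_or_gt t 0 with ht | ht
  · refine ⟨r + t, s + t, (1 + x) ^ t, by linarith, by linarith, by positivity, ?_⟩
    intro u w hu hw
    have hu0 : 0 < u := by linarith
    have hw0 : 0 < w := by linarith
    have hle : u + w * x ≤ u * w * (1 + x) := by
      nlinarith [mul_nonneg hu0.le (sub_nonneg.2 hw),
        mul_nonneg (mul_nonneg hw0.le hx.le) (sub_nonneg.2 hu)]
    calc (1 + x) ^ t * u ^ (r + t) * w ^ (s + t) = u ^ r * w ^ s * (u * w * (1 + x)) ^ t := by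
          rw [rpow_add hu0, rpow_add hw0, mul_rpow (by positivity) (by positivity),
            mul_rpow hu0.le hw0.le]
          ring
      _ ≤ u ^ r * w ^ s * (u + w * x) ^ t :=
          mul_le_mul_of_nonneg_left (rpow_le_rpow_of_nonpos (by positivity) hle ht) (by positivity)
  · obtain ⟨t₁, t₂, ht₁, ht₂, rfl, hr, hs⟩ := exists_split_of_pos h1 h2 h3 ht
    refine ⟨r + t₁, s + t₂, x ^ t₂, hr, hs, by positivity, ?_⟩
    intro u w hu hw
    have hu0 : 0 < u := by linarith
    have hw0 : 0 < w := by linarith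
    calc x ^ t₂ * u ^ (r + t₁) * w ^ (s + t₂) = u ^ r * w ^ s * (u ^ t₁ * (w * x) ^ t₂) := by
          rw [rpow_add hu0, rpow_add hw0, mul_rpow hw0.le hx.le]
          ring
      _ ≤ u ^ r * w ^ s * ((u + w * x) ^ t₁ * (u + w * x) ^ t₂) := by
          gcongr <;> nlinarith
      _ = u ^ r * w ^ s * (u + w * x) ^ (t₁ + t₂) := by
          rw [rpow_add (by positivity)]

lemma summable_inv_nat_add_one_rpow {a : ℝ} (ha : 1 < a) :
    Summable fun n : ℕ => (((n : ℝ) + 1) ^ a)⁻¹ := by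
  simpa using (summable_nat_add_iff 1).mpr (Real.summable_nat_rpow_inv.mpr ha)

lemma summable_thetaTerm {r s t x : ℝ} (h1 : 2 < r + s + t) (h2 : 1 < r + t) (h3 : 1 < s + t)
    (hx : 0 < x) : Summable (thetaTerm r s t x) := by
  obtain ⟨a, b, c, ha, hb, hc, hbound⟩ := exists_mul_rpow_le h1 h2 h3 hx
  have hdom : Summable fun p : ℕ × ℕ =>
      c⁻¹ * ((((p.1 : ℝ) + 1) ^ a)⁻¹ * (((p.2 : ℝ) + 1) ^ b)⁻¹) :=
    ((summable_inv_nat_add_one_rpow ha).mul_of_nonneg (summable_inv_nat_add_one_rpow hb)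
      (fun _ => by positivity) (fun _ => by positivity)).mul_left c⁻¹
  refine hdom.of_nonneg_of_le (fun p => by unfold thetaTerm; positivity) fun p => ?_
  calc thetaTerm r s t x p ≤ 1 / (c * ((p.1 : ℝ) + 1) ^ a * ((p.2 : ℝ) + 1) ^ b) :=
        one_div_le_one_div_of_le (by positivity) (hbound _ _ (by simp) (by simp))
    _ = c⁻¹ * ((((p.1 : ℝ) + 1) ^ a)⁻¹ * (((p.2 : ℝ) + 1) ^ b)⁻¹) := by
        rw [one_div, mul_inv, mul_inv, mul_assoc]

lemma Theta_eq_tsum_thetaTerm {r s t x : ℝ} (h1 : 2 < r + s + t) (h2 : 1 < r + t)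
    (h3 : 1 < s + t) (hx : 0 < x) : Theta r s t x = ∑' p, thetaTerm r s t x p :=
  ((summable_thetaTerm h1 h2 h3 hx).tsum_prod).symm

theorem theta_recursion (r s t : ℝ) (h1 : 2 < r + s + t) (h2 : 1 < r + t) (h3 : 1 < s + t)
    (n : ℕ) (x : ℝ) (hx : 0 < x) :
    Theta r s t x = ∑ ℓ ∈ Finset.range (n + 1),
      (n.choose ℓ : ℝ) * x ^ ℓ * Theta (r - n + ℓ) (s - ℓ) (t + n) x := by
  have shifted (ℓ : ℕ) (hℓ : ℓ ∈ Finset.range (n + 1)) :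
      2 < (r - n + ℓ) + (s - ℓ) + (t + n) ∧ 1 < (r - n + ℓ) + (t + n) ∧
        1 < (s - ℓ) + (t + n) := by
    have : (ℓ : ℝ) ≤ n := by exact_mod_cast Nat.lt_succ_iff.mp (Finset.mem_range.mp hℓ)
    refine ⟨by linarith, by linarith [ℓ.cast_nonneg (α := ℝ)], by linarith⟩
  rw [Theta_eq_tsum_thetaTerm h1 h2 h3 hx, tsum_congr (thetaTerm_eq_sum_choose r s t n hx),
    Summable.tsum_finsetSum fun ℓ hℓ => ?summable]
  case summable =>
    obtain ⟨h1', h2', h3'⟩ := shifted ℓ hℓ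
    exact (summable_thetaTerm h1' h2' h3' hx).mul_left _
  refine Finset.sum_congr rfl fun ℓ hℓ => ?_
  obtain ⟨h1', h2', h3'⟩ := shifted ℓ hℓ
  rw [tsum_mul_left, Theta_eq_tsum_thetaTerm h1' h2' h3' hx]
end

section
/- For any natural number t ≥ 3 and any x > 0, x^{t/2} Σ_{j=1}^{∞} ψ^{(t-1)}(1 + jx) = x^{-t/2} Σ_{j=1}^{∞} ψ^{(t-1)}(1 + j/x), where ψ^{(t-1)} denotes the (t-1)-st derivative of the digamma function. -/
set_option maxHeartbeats 1000000
open Real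

/-- The `j`-th derivative of digamma (for `j ≥ 1`):
`ψ^{(j)}(z) = (-1)^{j+1} j! ∑_{ℓ≥0} 1/(ℓ+z)^{j+1}`. -/
noncomputable def psiDeriv (j : ℕ) (z : ℝ) : ℝ :=
  (-1) ^ (j + 1) * (j.factorial : ℝ) * ∑' ℓ : ℕ, 1 / (((ℓ : ℝ) + z) ^ (j + 1))

lemma double_summable (t : ℕ) (ht : 3 ≤ t) (x : ℝ) (hx : 0 < x) :
    Summable (fun p : ℕ × ℕ => 1 / (((p.2 : ℝ) + 1 + ((p.1 : ℝ) + 1) * x) ^ t)) := by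
  have hp : -((t:ℝ)/2) < -1 := by
    have : (3:ℝ) ≤ t := by exact_mod_cast ht
    linarith
  have hsum1 : Summable (fun n : ℕ => ((n:ℝ)+1) ^ (-((t:ℝ)/2))) := by
    have := Real.summable_nat_rpow.mpr hp
    have h := (summable_nat_add_iff 1).mpr this
    simpa using h
  have hg : Summable (fun p : ℕ × ℕ =>
      (x ^ (-((t:ℝ)/2)) * ((p.1:ℝ)+1) ^ (-((t:ℝ)/2))) * ((p.2:ℝ)+1) ^ (-((t:ℝ)/2))) := by
    exact (hsum1.mul_left _).mul_of_nonneg hsum1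
      (fun n => by positivity) (fun n => by positivity)
  refine Summable.of_nonneg_of_le (fun p => by positivity) (fun p => ?_) hg
  obtain ⟨j, ℓ⟩ := p
  set A : ℝ := (ℓ:ℝ) + 1 with hA
  set B : ℝ := ((j:ℝ) + 1) * x with hB
  have hA0 : 0 < A := by positivity
  have hB0 : 0 < B := by positivity
  have hb : 0 < A + B := by linarith
  -- (A+B)^2 ≥ A*B, hence (A+B)^t ≥ (A*B)^(t/2)
  have key : (A * B) ^ ((t:ℝ)/2) ≤ (A + B) ^ t := by
    have h2 : A * B ≤ (A + B) ^ 2 := by nlinarith [sq_nonneg (A - B)]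
    have hsq : ((A * B) ^ ((t:ℝ)/2)) ^ 2 ≤ ((A + B) ^ t) ^ 2 := by
      have l1 : ((A * B) ^ ((t:ℝ)/2)) ^ 2 = (A * B) ^ (t:ℕ) := by
        rw [← Real.rpow_natCast ((A*B) ^ ((t:ℝ)/2)) 2, ← Real.rpow_mul (by positivity)]
        rw [← Real.rpow_natCast (A*B) t]
        norm_num
      have l2 : ((A + B) ^ t) ^ 2 = ((A + B) ^ 2) ^ t := by rw [← pow_mul, ← pow_mul, Nat.mul_comm]
      rw [l1, l2]
      exact pow_le_pow_left₀ (by positivity) h2 t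
    exact le_of_pow_le_pow_left₀ two_ne_zero (by positivity) hsq
  calc 1 / ((A + B) ^ t) ≤ 1 / ((A * B) ^ ((t:ℝ)/2)) := by
        apply one_div_le_one_div_of_le (by positivity) key
    _ = (x ^ (-((t:ℝ)/2)) * ((j:ℝ)+1) ^ (-((t:ℝ)/2))) * ((ℓ:ℝ)+1) ^ (-((t:ℝ)/2)) := by
        rw [one_div, ← Real.rpow_neg (by positivity)]
        rw [show A * B = x * (((j:ℝ)+1) * ((ℓ:ℝ)+1)) by rw [hA, hB]; ring]
        rw [Real.mul_rpow (le_of_lt hx) (by positivity),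
            Real.mul_rpow (by positivity) (by positivity)]
        ring

theorem guinand_higher (t : ℕ) (ht : 3 ≤ t) (x : ℝ) (hx : 0 < x) :
    x ^ ((t : ℝ) / 2) * ∑' j : ℕ, psiDeriv (t - 1) (1 + ((j : ℝ) + 1) * x)
      = x ^ (-((t : ℝ) / 2)) * ∑' j : ℕ, psiDeriv (t - 1) (1 + ((j : ℝ) + 1) / x) := by
  have hts : t - 1 + 1 = t := by omega
  set C : ℝ := (-1 : ℝ) ^ t * ((t - 1).factorial : ℝ) with hC
  have hpsi : ∀ z : ℝ, psiDeriv (t - 1) z = C * ∑' ℓ : ℕ, 1 / (((ℓ : ℝ) + z) ^ t) := by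
    intro z
    rw [psiDeriv, hts, mul_assoc]
  set F : ℕ × ℕ → ℝ := fun p => 1 / (((p.2 : ℝ) + 1 + ((p.1 : ℝ) + 1) * x) ^ t) with hFdef
  have hF : Summable F := double_summable t ht x hx
  have hfib : ∀ j : ℕ, Summable fun ℓ => F (j, ℓ) :=
    fun j => hF.comp_injective (fun a b h => by simpa using h)
  have hfib' : ∀ j : ℕ, Summable fun ℓ => F (ℓ, j) :=
    fun j => hF.comp_injective (fun a b h => by simpa using h)
  have hswap : Summable fun p : ℕ × ℕ => F p.swap :=
    (Equiv.prodComm ℕ ℕ).summable_iff.mpr hF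
  -- LHS sum
  have hL : ∑' j : ℕ, psiDeriv (t - 1) (1 + ((j : ℝ) + 1) * x) = C * ∑' p, F p := by
    calc ∑' j : ℕ, psiDeriv (t - 1) (1 + ((j : ℝ) + 1) * x)
        = ∑' j : ℕ, C * ∑' ℓ : ℕ, F (j, ℓ) := by
          refine tsum_congr fun j => ?_
          rw [hpsi]
          congr 1
          refine tsum_congr fun ℓ => ?_
          simp only [hFdef]
          ring_nf
      _ = C * ∑' j : ℕ, ∑' ℓ : ℕ, F (j, ℓ) := tsum_mul_left
      _ = C * ∑' p, F p := by rw [← Summable.tsum_prod' hF hfib]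
  -- RHS sum
  have hR : ∑' j : ℕ, psiDeriv (t - 1) (1 + ((j : ℝ) + 1) / x)
      = C * (x ^ t * ∑' p, F p) := by
    calc ∑' j : ℕ, psiDeriv (t - 1) (1 + ((j : ℝ) + 1) / x)
        = ∑' j : ℕ, C * (x ^ t * ∑' ℓ : ℕ, F (ℓ, j)) := by
          refine tsum_congr fun j => ?_
          rw [hpsi]
          congr 1
          rw [← tsum_mul_left]
          refine tsum_congr fun ℓ => ?_
          have hbase : ((ℓ : ℝ) + (1 + ((j : ℝ) + 1) / x))
              = (((j : ℝ) + 1 + ((ℓ : ℝ) + 1) * x)) / x := by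
            field_simp
            ring
          rw [hbase, div_pow, one_div_div, hFdef]
          simp only []
          rw [div_eq_mul_one_div]
      _ = C * (x ^ t * ∑' j : ℕ, ∑' ℓ : ℕ, F (ℓ, j)) := by
          rw [tsum_mul_left, tsum_mul_left]
      _ = C * (x ^ t * ∑' p : ℕ × ℕ, F p.swap) := by
          congr 2
          exact (Summable.tsum_prod' hswap (fun b => hfib' b)).symm
      _ = C * (x ^ t * ∑' p, F p) := by
          congr 2
          exact (Equiv.prodComm ℕ ℕ).tsum_eq F
  rw [hL, hR]
  have hxpow : x ^ (-((t : ℝ) / 2)) * x ^ t = x ^ ((t : ℝ) / 2) := by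
    rw [← Real.rpow_natCast x t, ← Real.rpow_add hx]
    ring_nf
  rw [show x ^ (-((t : ℝ) / 2)) * (C * (x ^ t * ∑' p, F p))
      = (x ^ (-((t : ℝ) / 2)) * x ^ t) * (C * ∑' p, F p) by ring, hxpow]
end

section
/- For any x > 0, x Σ_{j=1}^{∞} (ψ'(1+jx) - 1/(jx)) - (1/2) log x = (1/x) Σ_{j=1}^{∞} (ψ'(1+j/x) - x/j) - (1/2) log(1/x), where ψ' is the trigamma function. -/
/-!
Comparing `ψ'(1+y) = ∑ₗ 1/(ℓ+1+y)²` with the telescoping series `1/y = ∑ₗ (1/(ℓ+y) - 1/(ℓ+1+y))`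
gives `1/y - ψ'(1+y) = ∑ₗ 1/((ℓ+1+y)²(ℓ+y))`, a series of size `O(1/y²)`. Hence both sides become
absolutely convergent double series over `(j, ℓ)`. After swapping the indices on the right, the
difference of the two double series has, with `a = (j+1)x + ℓ + 1`, the general term
`(1/(a-x) - 1/a) - (x/(a-1) - x/a)`, which telescopes in `j` and in `ℓ` respectively. Its square
partial sums are therefore `∑_{j<N} x/(N + (j+1)x) - ∑_{ℓ<N} 1/(Nx + ℓ + 1)`, Riemann sums of
`∫₀¹ dt/(t + 1/x) - ∫₀¹ dt/(t + x) = log x`.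
-/

open Real

open Filter Finset Topology

lemma psiDeriv_one (z : ℝ) : psiDeriv 1 z = ∑' ℓ : ℕ, 1 / ((ℓ : ℝ) + z) ^ 2 := by
  simp [psiDeriv]

lemma hasSum_one_div_nat_add_sub_one_div_nat_add_one {y : ℝ} (hy : 0 < y) :
    HasSum (fun ℓ : ℕ => 1 / ((ℓ : ℝ) + y) - 1 / ((ℓ : ℝ) + 1 + y)) (1 / y) := by
  have hanti : ∀ ℓ : ℕ, 1 / ((ℓ : ℝ) + 1 + y) ≤ 1 / ((ℓ : ℝ) + y) := fun ℓ =>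
    one_div_le_one_div_of_le (by positivity) (by linarith)
  rw [hasSum_iff_tendsto_nat_of_nonneg (fun ℓ => sub_nonneg.2 (hanti ℓ))]
  have hlim : Tendsto (fun n : ℕ => 1 / ((n : ℝ) + y)) atTop (𝓝 0) :=
    tendsto_const_nhds.div_atTop (tendsto_atTop_add_const_right _ y tendsto_natCast_atTop_atTop)
  convert (tendsto_const_nhds (x := 1 / y)).sub hlim using 1
  · funext n
    simpa [add_right_comm] using Finset.sum_range_sub' (fun ℓ : ℕ => 1 / ((ℓ : ℝ) + y)) n
  · simp

noncomputable def trigammaDefect (y : ℝ) (ℓ : ℕ) : ℝ :=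
  1 / (((ℓ : ℝ) + 1 + y) ^ 2 * ((ℓ : ℝ) + y))

lemma trigammaDefect_nonneg {y : ℝ} (hy : 0 ≤ y) (ℓ : ℕ) : 0 ≤ trigammaDefect y ℓ := by
  unfold trigammaDefect; positivity

lemma hasSum_trigammaDefect {y : ℝ} (hy : 0 < y) :
    HasSum (trigammaDefect y) (1 / y - psiDeriv 1 (1 + y)) := by
  have htel := hasSum_one_div_nat_add_sub_one_div_nat_add_one hy
  have hsq : Summable (fun ℓ : ℕ => 1 / ((ℓ : ℝ) + (1 + y)) ^ 2) := by
    refine htel.summable.of_nonneg_of_le (fun ℓ => by positivity) fun ℓ => ?_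
    have h₀ : (0 : ℝ) < ℓ + y := by positivity
    rw [div_sub_div _ _ h₀.ne' (by positivity), div_le_div_iff₀ (by positivity) (by positivity)]
    nlinarith
  have hsplit : trigammaDefect y =
      fun ℓ : ℕ => (1 / ((ℓ : ℝ) + y) - 1 / ((ℓ : ℝ) + 1 + y)) - 1 / ((ℓ : ℝ) + (1 + y)) ^ 2 := by
    funext ℓ
    have h₀ : (0 : ℝ) < ℓ + y := by positivity
    simp only [trigammaDefect, ← add_assoc]
    field_simp
    ring
  rw [hsplit, psiDeriv_one]
  exact htel.sub hsq.hasSum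

lemma trigammaDefect_le {y : ℝ} (hy : 0 < y) (ℓ : ℕ) :
    trigammaDefect y ℓ ≤ 1 / y * (1 / ((ℓ : ℝ) + y) - 1 / ((ℓ : ℝ) + 1 + y)) := by
  have h₀ : (0 : ℝ) < ℓ + y := by positivity
  rw [trigammaDefect, div_sub_div _ _ h₀.ne' (by positivity), div_mul_div_comm,
    div_le_div_iff₀ (by positivity) (by positivity)]
  nlinarith [Nat.cast_nonneg (α := ℝ) ℓ]

lemma one_div_sub_psiDeriv_one_le {y : ℝ} (hy : 0 < y) :
    1 / y - psiDeriv 1 (1 + y) ≤ 1 / y ^ 2 := by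
  have h := hasSum_le (trigammaDefect_le hy) (hasSum_trigammaDefect hy)
    ((hasSum_one_div_nat_add_sub_one_div_nat_add_one hy).mul_left (1 / y))
  rwa [div_mul_div_comm, one_mul, ← sq] at h

lemma summable_trigammaDefect_prod {c : ℝ} (hc : 0 < c) :
    Summable (fun p : ℕ × ℕ => trigammaDefect ((p.1 + 1) * c) p.2) := by
  have hy : ∀ j : ℕ, 0 < ((j : ℝ) + 1) * c := fun j => by positivity
  refine (summable_prod_of_nonneg fun p => trigammaDefect_nonneg (hy p.1).le p.2).2
    ⟨fun j => (hasSum_trigammaDefect (hy j)).summable, ?_⟩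
  have hsq : Summable (fun j : ℕ => 1 / (((j : ℝ) + 1) * c) ^ 2) := by
    have h := ((summable_nat_add_iff 1).2 (Real.summable_one_div_nat_pow.2 one_lt_two)).mul_left
      (1 / c ^ 2)
    refine h.congr fun j => ?_
    push_cast
    field_simp
  refine hsq.of_nonneg_of_le (fun j => tsum_nonneg (trigammaDefect_nonneg (hy j).le))
    fun j => ?_
  rw [(hasSum_trigammaDefect (hy j)).tsum_eq]
  exact one_div_sub_psiDeriv_one_le (hy j)

lemma tsum_psiDeriv_one_sub_one_div {c : ℝ} (hc : 0 < c) :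
    ∑' j : ℕ, (psiDeriv 1 (1 + ((j : ℝ) + 1) * c) - 1 / (((j : ℝ) + 1) * c))
      = -∑' p : ℕ × ℕ, trigammaDefect ((p.1 + 1) * c) p.2 := by
  rw [(summable_trigammaDefect_prod hc).tsum_prod, ← tsum_neg]
  refine tsum_congr fun j => ?_
  rw [(hasSum_trigammaDefect (by positivity : (0 : ℝ) < (j + 1) * c)).tsum_eq]
  ring

lemma HasSum.tendsto_sum_range_prod_range {M : Type*} [AddCommMonoid M] [TopologicalSpace M]
    {f : ℕ × ℕ → M} {a : M} (hf : HasSum f a) :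
    Tendsto (fun N => ∑ p ∈ range N ×ˢ range N, f p) atTop (𝓝 a) := by
  have h : Tendsto (fun N : ℕ => (range N, range N)) atTop atTop := by
    rw [← prod_atTop_atTop_eq]
    exact tendsto_finset_range.prodMk tendsto_finset_range
  exact hf.comp (tendsto_finsetProd_atTop.comp h)

lemma sum_range_prod_range_sub_sub {M : Type*} [AddCommGroup M] (G H : ℕ → ℕ → M) (N : ℕ) :
    ∑ p ∈ range N ×ˢ range N, ((G p.1 p.2 - G (p.1 + 1) p.2) - (H p.1 p.2 - H p.1 (p.2 + 1)))
      = ∑ ℓ ∈ range N, (G 0 ℓ - G N ℓ) - ∑ j ∈ range N, (H j 0 - H j N) := by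
  rw [sum_sub_distrib, sum_product_right, sum_product]
  simp only [sum_range_sub']

lemma div_add_le_log_add_sub_log {u c : ℝ} (hu : 0 < u) (hc : 0 ≤ c) :
    c / (u + c) ≤ log (u + c) - log u := by
  have h := one_sub_inv_le_log_of_pos (div_pos (by positivity : 0 < u + c) hu)
  rw [log_div (by positivity) hu.ne', inv_div] at h
  calc c / (u + c) = 1 - u / (u + c) := by field_simp; ring
    _ ≤ _ := h

lemma log_add_sub_log_le_div {u c : ℝ} (hu : 0 < u) (hc : 0 ≤ c) :
    log (u + c) - log u ≤ c / u := by
  have h := log_le_sub_one_of_pos (div_pos (by positivity : 0 < u + c) hu)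
  rw [log_div (by positivity) hu.ne'] at h
  calc _ ≤ (u + c) / u - 1 := h
    _ = c / u := by field_simp; ring

lemma tendsto_sum_range_div_mul_add {a c : ℝ} (ha : 0 < a) (hc : 0 < c) :
    Tendsto (fun N : ℕ => ∑ k ∈ range N, c / (a * N + (k + 1) * c)) atTop
      (𝓝 (log ((a + c) / a))) := by
  have hlower : Tendsto (fun N : ℕ => log ((a + c) * N + c) - log (a * N + c)) atTop
      (𝓝 (log ((a + c) / a))) := by
    have h := (tendsto_add_mul_div_add_mul_atTop_nhds c c (a + c) ha.ne').log
      (div_pos (by positivity) ha).ne'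
    refine h.congr fun N => ?_
    rw [log_div (by positivity) (by positivity)]
    ring_nf
  refine tendsto_of_tendsto_of_tendsto_of_le_of_le' hlower tendsto_const_nhds ?_ ?_
  · refine Eventually.of_forall fun N => ?_
    have htel := sum_range_sub (fun k : ℕ => log (a * N + (k + 1) * c)) N
    calc log ((a + c) * N + c) - log (a * N + c)
        = ∑ k ∈ range N, (log (a * N + (k + 1 + 1) * c) - log (a * N + (k + 1) * c)) := by
          push_cast at htel; rw [htel]; ring_nf
      _ ≤ _ := sum_le_sum fun k _ => by
          have h := log_add_sub_log_le_div (by positivity : 0 < a * N + (k + 1) * c) hc.le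
          rwa [show a * N + (k + 1) * c + c = a * N + (k + 1 + 1) * c by ring] at h
  · filter_upwards [eventually_ge_atTop 1] with N hN
    have hN : (0 : ℝ) < N := by exact_mod_cast hN
    have htel := sum_range_sub (fun k : ℕ => log (a * N + k * c)) N
    calc ∑ k ∈ range N, c / (a * N + (k + 1) * c)
        ≤ ∑ k ∈ range N, (log (a * N + (k + 1) * c) - log (a * N + k * c)) :=
          sum_le_sum fun k _ => by
            have h := div_add_le_log_add_sub_log (by positivity : 0 < a * N + k * c) hc.le
            rwa [show a * N + k * c + c = a * N + (k + 1) * c by ring] at h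
      _ = log ((a + c) / a) := by
          push_cast at htel
          rw [htel, log_div (by positivity) ha.ne', ← log_div (by positivity) (by positivity),
            ← log_div (by positivity) ha.ne']
          congr 1
          field_simp
          ring

lemma sum_range_prod_range_trigammaDefect {x : ℝ} (hx : 0 < x) (N : ℕ) :
    ∑ p ∈ range N ×ˢ range N,
        (x⁻¹ * trigammaDefect ((p.2 + 1) * x⁻¹) p.1 - x * trigammaDefect ((p.1 + 1) * x) p.2)
      = ∑ j ∈ range N, x / (1 * N + (j + 1) * x) - ∑ ℓ ∈ range N, 1 / (x * N + (ℓ + 1) * 1) := by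
  set G : ℕ → ℕ → ℝ := fun j ℓ => 1 / (j * x + ℓ + 1)
  set H : ℕ → ℕ → ℝ := fun j ℓ => x / ((j + 1) * x + ℓ)
  have hterm : ∀ p : ℕ × ℕ,
      x⁻¹ * trigammaDefect ((p.2 + 1) * x⁻¹) p.1 - x * trigammaDefect ((p.1 + 1) * x) p.2
        = (G p.1 p.2 - G (p.1 + 1) p.2) - (H p.1 p.2 - H p.1 (p.2 + 1)) := by
    rintro ⟨j, ℓ⟩
    have h₁ : (0 : ℝ) < j * x + ℓ + 1 := by positivity
    have h₂ : (0 : ℝ) < (j + 1) * x + ℓ := by positivity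
    simp only [trigammaDefect, G, H]
    push_cast
    field_simp
    ring
  rw [sum_congr rfl fun p _ => hterm p, sum_range_prod_range_sub_sub]
  have hG : ∀ ℓ : ℕ, G 0 ℓ = H ℓ 0 := fun ℓ => by
    simp only [G, H]; field_simp; ring
  simp only [sum_sub_distrib, hG, sub_sub_sub_cancel_left]
  congr 1 <;> refine sum_congr rfl fun _ _ => ?_ <;> simp only [G, H] <;> ring

lemma inv_mul_tsum_sub_mul_tsum_trigammaDefect {x : ℝ} (hx : 0 < x) :
    x⁻¹ * ∑' p : ℕ × ℕ, trigammaDefect ((p.1 + 1) * x⁻¹) p.2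
      - x * ∑' p : ℕ × ℕ, trigammaDefect ((p.1 + 1) * x) p.2 = log x := by
  have hswap : ∑' p : ℕ × ℕ, trigammaDefect ((p.1 + 1) * x⁻¹) p.2
      = ∑' p : ℕ × ℕ, trigammaDefect ((p.2 + 1) * x⁻¹) p.1 :=
    ((Equiv.prodComm ℕ ℕ).tsum_eq _).symm
  have hsum₁ : Summable fun p : ℕ × ℕ => x⁻¹ * trigammaDefect ((p.2 + 1) * x⁻¹) p.1 :=
    (summable_trigammaDefect_prod (inv_pos.2 hx)).prod_symm.mul_left x⁻¹
  have hsum₂ : Summable fun p : ℕ × ℕ => x * trigammaDefect ((p.1 + 1) * x) p.2 :=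
    (summable_trigammaDefect_prod hx).mul_left x
  have hlim : Tendsto (fun N : ℕ => ∑ p ∈ range N ×ˢ range N,
      (x⁻¹ * trigammaDefect ((p.2 + 1) * x⁻¹) p.1 - x * trigammaDefect ((p.1 + 1) * x) p.2))
      atTop (𝓝 (log x)) := by
    have h := (tendsto_sum_range_div_mul_add one_pos hx).sub
      (tendsto_sum_range_div_mul_add hx one_pos)
    simp_rw [sum_range_prod_range_trigammaDefect hx]
    convert h using 2
    rw [← log_div (by positivity) (by positivity)]
    congr 1
    field_simp
    ring
  rw [hswap, ← tsum_mul_left, ← tsum_mul_left, ← hsum₁.tsum_sub hsum₂]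
  exact tendsto_nhds_unique (hsum₁.sub hsum₂).hasSum.tendsto_sum_range_prod_range hlim

theorem guinand_trigamma (x : ℝ) (hx : 0 < x) :
    x * (∑' j : ℕ, (psiDeriv 1 (1 + ((j : ℝ) + 1) * x) - 1 / (((j : ℝ) + 1) * x)))
        - (1 / 2) * Real.log x
      = (1 / x) * (∑' j : ℕ, (psiDeriv 1 (1 + ((j : ℝ) + 1) / x) - x / ((j : ℝ) + 1)))
        - (1 / 2) * Real.log (1 / x) := by
  have hrhs : ∑' j : ℕ, (psiDeriv 1 (1 + ((j : ℝ) + 1) / x) - x / ((j : ℝ) + 1))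
      = ∑' j : ℕ, (psiDeriv 1 (1 + ((j : ℝ) + 1) * x⁻¹) - 1 / (((j : ℝ) + 1) * x⁻¹)) := by
    simp only [div_eq_mul_inv, one_mul, mul_inv, inv_inv, mul_comm]
  rw [hrhs, tsum_psiDeriv_one_sub_one_div hx, tsum_psiDeriv_one_sub_one_div (inv_pos.2 hx),
    one_div x, log_inv]
  linarith [inv_mul_tsum_sub_mul_tsum_trigammaDefect hx]
end

section
/- For any integer r ≥ 2 and any x > 0, Σ_{m=1}^{∞} ψ(mx)/m^r + (-x)^{r-1} Σ_{m=1}^{∞} ψ(m/x)/m^r = ζ(r+1)((-x)^r - 1/x) - Σ_{ℓ=1}^{r} ζ(ℓ)ζ(r-ℓ+1)(-x)^{ℓ-1}, with the convention ζ(1) = γ (Euler's constant). -/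
open Real

/-- The digamma function, via the series `ψ(z) = -γ + ∑_{n≥0} (1/(n+1) - 1/(n+z))`. -/
noncomputable def digamma (z : ℝ) : ℝ :=
  -Real.eulerMascheroniConstant + ∑' n : ℕ, (1 / ((n : ℝ) + 1) - 1 / ((n : ℝ) + z))
/-- Riemann zeta at natural arguments, with the convention `ζ(1) = γ`. -/
noncomputable def zetaC (n : ℕ) : ℝ :=
  if n = 1 then Real.eulerMascheroniConstant else (riemannZeta (n : ℝ)).re

/-!
Expanding `ψ(mx) = -γ - 1/(mx) + ∑_{n ≥ 1} mx / (n (n + mx))` writes `F_{s+2}(x)` as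
`-γ ζ(s+2) - ζ(s+3)/x` plus the absolutely convergent double series
`∑_{m,n} x / (m^(s+1) n (n + mx))`. In the double series for `1/x` swap `m` and `n`: the two
kernels then share the factor `1/(n + mx)`, and their combination with weights `1` and
`(-x)^(s+1)` is a finite geometric sum of monomials `m^(-a) n^(-b)` with `a + b = s + 3`,
`a, b ≥ 2`, whose double series is `ζ(a) ζ(b)`.
-/

open Finset Filter

lemma hasSum_zetaC {k : ℕ} (hk : 2 ≤ k) :
    HasSum (fun n : ℕ => 1 / ((n : ℝ) + 1) ^ k) (zetaC k) := by
  have hsum : Summable (fun n : ℕ => 1 / ((n : ℝ) + 1) ^ k) := by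
    simpa using (summable_nat_add_iff 1).2 (Real.summable_one_div_nat_pow.2 (by omega : 1 < k))
  have hterm (n : ℕ) : 1 / ((n : ℂ) + 1) ^ ((k : ℝ) : ℂ) = ((1 / ((n : ℝ) + 1) ^ k : ℝ) : ℂ) := by
    rw [Complex.ofReal_natCast, Complex.cpow_natCast]; push_cast; rfl
  have hk' : (1 : ℝ) < ((k : ℝ) : ℂ).re := by simp only [Complex.ofReal_re]; exact_mod_cast hk
  rw [zetaC, if_neg (by omega), zeta_eq_tsum_one_div_nat_add_one_cpow hk']
  simpa only [hterm, ← Complex.ofReal_tsum, Complex.ofReal_re] using hsum.hasSum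

lemma hasSum_sub_succ_of_antitone {f : ℕ → ℝ} {l : ℝ} (hf : Antitone f)
    (hl : Tendsto f atTop (nhds l)) : HasSum (fun n => f n - f (n + 1)) (f 0 - l) := by
  rw [hasSum_iff_tendsto_nat_of_nonneg fun n => sub_nonneg.2 (hf n.le_succ)]
  simp_rw [sum_range_sub']
  exact tendsto_const_nhds.sub hl

lemma hasSum_digamma {z : ℝ} (hz : 0 < z) :
    HasSum (fun n : ℕ => z / (((n : ℝ) + 1) * ((n : ℝ) + 1 + z)))
      (digamma z + eulerMascheroniConstant + 1 / z) := by
  have hsumm : Summable (fun n : ℕ => z / (((n : ℝ) + 1) * ((n : ℝ) + 1 + z))) := by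
    refine .of_nonneg_of_le (fun n => by positivity) (fun n => ?_)
      ((hasSum_zetaC le_rfl).summable.mul_left z)
    rw [mul_one_div, sq]
    exact div_le_div_of_nonneg_left hz.le (by positivity)
      (mul_le_mul_of_nonneg_left (by linarith) (by positivity))
  have htel : HasSum (fun n : ℕ => 1 / ((n : ℝ) + z) - 1 / ((n : ℝ) + 1 + z)) (1 / z) := by
    have hanti : Antitone fun n : ℕ => 1 / ((n : ℝ) + z) := fun m n hmn =>
      one_div_le_one_div_of_le (by positivity) (by gcongr)
    have hlim : Tendsto (fun n : ℕ => 1 / ((n : ℝ) + z)) atTop (nhds 0) := by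
      simpa only [one_div, Pi.inv_def] using
        (tendsto_natCast_atTop_atTop.atTop_add tendsto_const_nhds).inv_tendsto_atTop
    simpa [add_right_comm] using hasSum_sub_succ_of_antitone hanti hlim
  have hdigamma : digamma z + eulerMascheroniConstant
      = ∑' n : ℕ, z / (((n : ℝ) + 1) * ((n : ℝ) + 1 + z)) - 1 / z := by
    rw [digamma, neg_add_cancel_comm, ← (hsumm.hasSum.sub htel).tsum_eq]
    congr 1 with n
    field_simp
    ring
  rw [hdigamma, sub_add_cancel]
  exact hsumm.hasSum

lemma summable_one_div_mul_sqrt :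
    Summable fun n : ℕ => 1 / (((n : ℝ) + 1) * √((n : ℝ) + 1)) := by
  refine ((summable_one_div_nat_add_rpow 1 (1 / 2 + 1)).2 (by norm_num)).congr fun n => ?_
  rw [abs_of_pos (by positivity), rpow_add_one (by positivity), ← sqrt_eq_rpow, mul_comm]

noncomputable def herglotzTerm (s : ℕ) (x M N : ℝ) : ℝ :=
  x / (M ^ (s + 1) * N * (N + M * x))

lemma herglotzTerm_le (s : ℕ) {x M N : ℝ} (hx : 0 < x) (hM : 1 ≤ M) (hN : 0 < N) :
    herglotzTerm s x M N ≤ √x * (1 / (M * √M) * (1 / (N * √N))) := by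
  have hM0 : 0 < M := by linarith
  have hamgm : √N * √M * √x ≤ N + M * x := by
    rw [← sqrt_mul hN.le, ← sqrt_mul (by positivity)]
    exact sqrt_le_iff.2 ⟨by positivity, by nlinarith [mul_pos hM0 hx]⟩
  have hden : M * √M * (N * √N) * √x ≤ M ^ (s + 1) * N * (N + M * x) :=
    calc M * √M * (N * √N) * √x = M * N * (√N * √M * √x) := by ring
      _ ≤ M * N * (N + M * x) := by gcongr
      _ ≤ M ^ (s + 1) * N * (N + M * x) := by gcongr; exact le_self_pow₀ hM (by omega)
  calc herglotzTerm s x M N ≤ x / (M * √M * (N * √N) * √x) :=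
        div_le_div_of_nonneg_left hx.le (by positivity) hden
    _ = √x * (1 / (M * √M) * (1 / (N * √N))) := by
        nth_rewrite 1 [← mul_self_sqrt hx.le]
        field_simp

lemma summable_herglotzTerm (s : ℕ) {x : ℝ} (hx : 0 < x) :
    Summable fun p : ℕ × ℕ => herglotzTerm s x (p.1 + 1) (p.2 + 1) :=
  .of_nonneg_of_le (fun p => div_nonneg hx.le (by positivity))
    (fun p => herglotzTerm_le s hx (by simp) (by positivity))
    ((summable_one_div_mul_sqrt.mul_of_nonneg summable_one_div_mul_sqrt
      (fun _ => by positivity) (fun _ => by positivity)).mul_left √x)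

lemma hasSum_herglotzTerm (s : ℕ) {x M : ℝ} (hx : 0 < x) (hM : 0 < M) :
    HasSum (fun n : ℕ => herglotzTerm s x M (n + 1))
      ((digamma (M * x) + eulerMascheroniConstant + 1 / (M * x)) / M ^ (s + 2)) := by
  refine ((hasSum_digamma (mul_pos hM hx)).div_const (M ^ (s + 2))).congr_fun fun n => ?_
  unfold herglotzTerm
  field_simp
  ring

lemma tsum_digamma_mul_div_pow (s : ℕ) {x : ℝ} (hx : 0 < x) :
    ∑' m : ℕ, digamma (((m : ℝ) + 1) * x) / ((m : ℝ) + 1) ^ (s + 2)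
      = -eulerMascheroniConstant * zetaC (s + 2) - zetaC (s + 3) / x
        + ∑' p : ℕ × ℕ, herglotzTerm s x (p.1 + 1) (p.2 + 1) := by
  have hK := summable_herglotzTerm s hx
  have hrows : HasSum (fun m : ℕ => (digamma (((m : ℝ) + 1) * x) + eulerMascheroniConstant
      + 1 / (((m : ℝ) + 1) * x)) / ((m : ℝ) + 1) ^ (s + 2))
      (∑' p : ℕ × ℕ, herglotzTerm s x (p.1 + 1) (p.2 + 1)) := by
    have hsum := hK.prod.hasSum
    rw [← hK.tsum_prod] at hsum
    exact hsum.congr_fun fun m => (hasSum_herglotzTerm s hx (by positivity)).tsum_eq.symm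
  have hcorr : HasSum (fun m : ℕ => eulerMascheroniConstant * (1 / ((m : ℝ) + 1) ^ (s + 2))
      + 1 / ((m : ℝ) + 1) ^ (s + 3) / x)
      (eulerMascheroniConstant * zetaC (s + 2) + zetaC (s + 3) / x) :=
    ((hasSum_zetaC (by omega)).mul_left _).add ((hasSum_zetaC (by omega)).div_const x)
  calc ∑' m : ℕ, digamma (((m : ℝ) + 1) * x) / ((m : ℝ) + 1) ^ (s + 2)
      = ∑' m : ℕ, ((digamma (((m : ℝ) + 1) * x) + eulerMascheroniConstant
          + 1 / (((m : ℝ) + 1) * x)) / ((m : ℝ) + 1) ^ (s + 2)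
          - (eulerMascheroniConstant * (1 / ((m : ℝ) + 1) ^ (s + 2))
            + 1 / ((m : ℝ) + 1) ^ (s + 3) / x)) := tsum_congr fun m => by
        field_simp
        ring
    _ = _ := by
      rw [(hrows.sub hcorr).tsum_eq]
      ring

lemma herglotzTerm_add_herglotzTerm_inv (s : ℕ) {x M N : ℝ} (hx : 0 < x) (hM : 0 < M)
    (hN : 0 < N) :
    herglotzTerm s x M N + (-x) ^ (s + 1) * herglotzTerm s x⁻¹ N M
      = -∑ j ∈ range s, 1 / M ^ (s + 1 - j) * (1 / N ^ (j + 2)) * (-x) ^ (j + 1) := by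
  have hterm : ∀ j ∈ range s, 1 / M ^ (s + 1 - j) * (1 / N ^ (j + 2)) * (-x) ^ (j + 1)
      = -x / (M ^ 2 * N ^ 2) * ((-x / N) ^ j * (1 / M) ^ (s - 1 - j)) := by
    intro j hj
    obtain ⟨k, rfl⟩ : ∃ k, s = j + k + 1 := ⟨s - j - 1, by grind⟩
    rw [show j + k + 1 + 1 - j = k + 2 by omega, show j + k + 1 - 1 - j = k by omega, div_pow,
      one_div_pow]
    field_simp
    ring
  -- `a^s - b^s = (a - b) ∑ a^j b^(s-1-j)` with `a = -x/N`, `b = 1/M`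
  have hgeom := geom_sum₂_mul (-x / N) (1 / M) s
  have hne : -x / N - 1 / M ≠ 0 := by
    rw [neg_div, ← neg_add']
    exact neg_ne_zero.2 (by positivity)
  rw [sum_congr rfl hterm, ← mul_sum]
  apply mul_right_cancel₀ hne
  rw [neg_mul, mul_assoc, hgeom]
  unfold herglotzTerm
  rw [div_pow, one_div_pow]
  field_simp
  ring

lemma hasSum_zetaC_mul_zetaC {a b : ℕ} (ha : 2 ≤ a) (hb : 2 ≤ b) :
    HasSum (fun p : ℕ × ℕ => 1 / ((p.1 : ℝ) + 1) ^ a * (1 / ((p.2 : ℝ) + 1) ^ b))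
      (zetaC a * zetaC b) :=
  (hasSum_zetaC ha).mul (hasSum_zetaC hb) ((hasSum_zetaC ha).summable.mul_of_nonneg
    (hasSum_zetaC hb).summable (fun _ => by positivity) (fun _ => by positivity))

lemma tsum_herglotzTerm_add_tsum_herglotzTerm_inv (s : ℕ) {x : ℝ} (hx : 0 < x) :
    ∑' p : ℕ × ℕ, herglotzTerm s x (p.1 + 1) (p.2 + 1)
        + (-x) ^ (s + 1) * ∑' p : ℕ × ℕ, herglotzTerm s x⁻¹ (p.1 + 1) (p.2 + 1)
      = -∑ j ∈ range s, zetaC (s + 1 - j) * zetaC (j + 2) * (-x) ^ (j + 1) := by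
  have hswap : HasSum (fun p : ℕ × ℕ => herglotzTerm s x⁻¹ (p.2 + 1) (p.1 + 1))
      (∑' p : ℕ × ℕ, herglotzTerm s x⁻¹ (p.1 + 1) (p.2 + 1)) :=
    (Equiv.prodComm ℕ ℕ).hasSum_iff.2 (summable_herglotzTerm s (inv_pos.2 hx)).hasSum
  have hzeta := (hasSum_sum fun j (hj : j ∈ range s) =>
    (hasSum_zetaC_mul_zetaC (a := s + 1 - j) (b := j + 2) (by grind) le_add_self).mul_right
      ((-x) ^ (j + 1))).neg
  refine ((summable_herglotzTerm s hx).hasSum.add (hswap.mul_left _)).unique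
    (hzeta.congr_fun fun p => ?_)
  exact herglotzTerm_add_herglotzTerm_inv s hx (by positivity) (by positivity)

lemma Finset.sum_Icc_one_eq_add_sum_range_add {M : Type*} [AddCommMonoid M] (f : ℕ → M)
    (s : ℕ) : ∑ ℓ ∈ Icc 1 (s + 2), f ℓ = f 1 + ∑ j ∈ range s, f (j + 2) + f (s + 2) := by
  rw [← Ico_add_one_right_eq_Icc, sum_Ico_eq_sum_range, Nat.add_sub_cancel, sum_range_succ,
    sum_range_succ', add_comm 1 (s + 1)]
  simp only [add_comm 1, add_assoc, one_add_one_eq_two, zero_add]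
  abel

theorem vlasenko_zagier_two_term (r : ℕ) (hr : 2 ≤ r) (x : ℝ) (hx : 0 < x) :
    (∑' m : ℕ, digamma (((m : ℝ) + 1) * x) / ((m : ℝ) + 1) ^ r)
      + (-x) ^ (r - 1) * ∑' m : ℕ, digamma (((m : ℝ) + 1) / x) / ((m : ℝ) + 1) ^ r
    = zetaC (r + 1) * ((-x) ^ r - 1 / x)
      - ∑ ℓ ∈ Finset.Icc 1 r, zetaC ℓ * zetaC (r - ℓ + 1) * (-x) ^ (ℓ - 1) := by
  obtain ⟨s, rfl⟩ : ∃ s, r = s + 2 := ⟨r - 2, by omega⟩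
  have hmiddle : ∑ j ∈ range s, zetaC (j + 2) * zetaC (s + 2 - (j + 2) + 1) * (-x) ^ (j + 2 - 1)
      = ∑ j ∈ range s, zetaC (s + 1 - j) * zetaC (j + 2) * (-x) ^ (j + 1) :=
    sum_congr rfl fun j hj => by
      rw [mem_range] at hj
      rw [show s + 2 - (j + 2) + 1 = s + 1 - j by omega, Nat.add_sub_assoc one_le_two]
      ring
  simp only [div_eq_mul_inv ((_ : ℝ) + 1) x, tsum_digamma_mul_div_pow s hx,
    tsum_digamma_mul_div_pow s (inv_pos.2 hx), Finset.sum_Icc_one_eq_add_sum_range_add, hmiddle]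
  rw [show s + 2 - 1 + 1 = s + 2 by omega, show s + 2 - (s + 2) + 1 = 1 by omega,
    show s + 2 - 1 = s + 1 by omega, Nat.sub_self, pow_zero,
    show zetaC 1 = eulerMascheroniConstant from if_pos rfl, div_inv_eq_mul]
  linear_combination tsum_herglotzTerm_add_tsum_herglotzTerm_inv s hx
end

section
/- For any real r > 1 and x > 0, lim_{t → 1-r} Θ(r-1, 1, t+r, x) = γ ζ(r) + Σ_{m=1}^{∞} ψ(m/x + 1)/m^r, where the limit is taken through values where Θ converges; equivalently, Σ_{n=1}^{∞} Σ_{m=1}^{∞} 1/(n^{r-1} m (n + mx)) = γ ζ(r) + Σ_{m=1}^{∞} ψ(m/x + 1)/m^r. -/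
open Real

/-- The Riemann zeta function at a real argument. -/
noncomputable def rzeta (x : ℝ) : ℝ := (riemannZeta x).re

section Aux

private lemma summable_shift {p : ℝ} (hp : 1 < p) :
    Summable (fun n : ℕ => 1 / ((n : ℝ) + 1) ^ p) := by
  have h := (summable_nat_add_iff (f := fun n : ℕ => 1 / (n : ℝ) ^ p) 1).mpr
    (Real.summable_one_div_nat_rpow.mpr hp)
  refine h.congr fun n => ?_
  push_cast
  ring_nf

/-- Summability of the double series at exponent 1. -/
private lemma summable_base {r x : ℝ} (hr : 1 < r) (hx : 0 < x) :
    Summable (fun p : ℕ × ℕ =>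
      1 / (((p.1 : ℝ) + 1) ^ (r - 1) * ((p.2 : ℝ) + 1)
          * (((p.1 : ℝ) + 1) + ((p.2 : ℝ) + 1) * x))) := by
  set ε : ℝ := (max (2 - r) 0 + 1) / 2 with hεdef
  have hm0 : (0 : ℝ) ≤ max (2 - r) 0 := le_max_right _ _
  have hm1 : max (2 - r) 0 < 1 := max_lt (by linarith) one_pos
  have hε0 : 0 < ε := by rw [hεdef]; linarith
  have hε1 : ε < 1 := by rw [hεdef]; linarith
  have hεr : 2 - r < ε := by
    rcases le_or_gt (2 - r) 0 with h | h
    · linarith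
    · have hmax : max (2 - r) 0 = 2 - r := max_eq_left h.le
      rw [hεdef, hmax]; linarith
  have hp1 : 1 < r - 1 + ε := by linarith
  have hp2 : 1 < 2 - ε := by linarith
  have hxq : 0 < x ^ (1 - ε) := Real.rpow_pos_of_pos hx _
  have hsum : Summable (fun p : ℕ × ℕ =>
      (1 / x ^ (1 - ε)) *
        (1 / ((p.1 : ℝ) + 1) ^ (r - 1 + ε) * (1 / ((p.2 : ℝ) + 1) ^ (2 - ε)))) := by
    exact (((summable_shift hp1).mul_of_nonneg (summable_shift hp2)
      (fun n => by positivity) (fun n => by positivity))).mul_left _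
  refine Summable.of_nonneg_of_le (fun p => by positivity) (fun p => ?_) hsum
  set A : ℝ := (p.1 : ℝ) + 1 with hAdef
  set B : ℝ := (p.2 : ℝ) + 1 with hBdef
  have hA : 0 < A := by positivity
  have hB : 0 < B := by positivity
  have hA1 : 1 ≤ A := by rw [hAdef]; linarith [(Nat.cast_nonneg p.1 : (0:ℝ) ≤ (p.1:ℝ))]
  have hBx : 0 < B * x := by positivity
  have hAM : A ^ ε * (B * x) ^ (1 - ε) ≤ A + B * x := by
    have hMpos : 0 < max A (B * x) := lt_of_lt_of_le hA (le_max_left _ _)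
    calc A ^ ε * (B * x) ^ (1 - ε)
        ≤ (max A (B * x)) ^ ε * (max A (B * x)) ^ (1 - ε) := by
          apply mul_le_mul
          · exact Real.rpow_le_rpow hA.le (le_max_left _ _) hε0.le
          · exact Real.rpow_le_rpow hBx.le (le_max_right _ _) (by linarith)
          · positivity
          · positivity
      _ = max A (B * x) := by
          rw [← Real.rpow_add hMpos]
          norm_num
      _ ≤ A + B * x := max_le (by linarith) (by linarith)
  have hden : A ^ (r - 1 + ε) * B ^ (2 - ε) * x ^ (1 - ε)
      ≤ A ^ (r - 1) * B * (A + B * x) := by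
    have h1 : A ^ (r - 1 + ε) = A ^ (r - 1) * A ^ ε := Real.rpow_add hA _ _
    have h2 : B ^ (2 - ε) = B * B ^ (1 - ε) := by
      rw [show (2 - ε : ℝ) = 1 + (1 - ε) by ring, Real.rpow_add hB, Real.rpow_one]
    have h3 : (B * x) ^ (1 - ε) = B ^ (1 - ε) * x ^ (1 - ε) :=
      Real.mul_rpow hB.le hx.le
    calc A ^ (r - 1 + ε) * B ^ (2 - ε) * x ^ (1 - ε)
        = A ^ (r - 1) * B * (A ^ ε * (B * x) ^ (1 - ε)) := by
          rw [h1, h2, h3]; ring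
      _ ≤ A ^ (r - 1) * B * (A + B * x) := by
          apply mul_le_mul_of_nonneg_left hAM; positivity
  calc 1 / (A ^ (r - 1) * B * (A + B * x))
      ≤ 1 / (A ^ (r - 1 + ε) * B ^ (2 - ε) * x ^ (1 - ε)) := by
        apply one_div_le_one_div_of_le
        · positivity
        · exact hden
    _ = (1 / x ^ (1 - ε)) * (1 / A ^ (r - 1 + ε) * (1 / B ^ (2 - ε))) := by
        rw [one_div, one_div, one_div, one_div]
        rw [mul_inv, mul_inv]
        ring

/-- The inner sum evaluates via the digamma function. -/
private lemma inner_eq {r x : ℝ} (hx : 0 < x) (n : ℕ) :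
    ∑' m : ℕ, 1 / (((n : ℝ) + 1) ^ (r - 1) * ((m : ℝ) + 1)
        * (((n : ℝ) + 1) + ((m : ℝ) + 1) * x))
      = (Real.eulerMascheroniConstant + digamma (((n : ℝ) + 1) / x + 1))
          / ((n : ℝ) + 1) ^ r := by
  set A : ℝ := (n : ℝ) + 1 with hAdef
  have hA : 0 < A := by positivity
  have hC : 0 < A ^ (r - 1) := Real.rpow_pos_of_pos hA _
  have hAr : A ^ r = A ^ (r - 1) * A := by
    rw [← Real.rpow_add_one hA.ne' (r - 1)]
    norm_num
  have hpt : ∀ m : ℕ, 1 / (A ^ (r - 1) * ((m : ℝ) + 1) * (A + ((m : ℝ) + 1) * x))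
      = (1 / A ^ r) * (1 / ((m : ℝ) + 1) - 1 / ((m : ℝ) + (A / x + 1))) := by
    intro m
    have hB : (0 : ℝ) < (m : ℝ) + 1 := by positivity
    set B : ℝ := (m : ℝ) + 1 with hBdef
    have h1 : (m : ℝ) + (A / x + 1) = B + A / x := by rw [hBdef]; ring
    have hBAx : 0 < B + A / x := by positivity
    have hABx : 0 < A + B * x := by positivity
    rw [h1, hAr]
    field_simp
    ring
  rw [tsum_congr hpt, tsum_mul_left]
  have hdig : ∑' m : ℕ, (1 / ((m : ℝ) + 1) - 1 / ((m : ℝ) + (A / x + 1)))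
      = Real.eulerMascheroniConstant + digamma (A / x + 1) := by
    rw [digamma]; ring
  rw [hdig, one_div_mul_eq_div]

/-- The zeta sum. -/
private lemma tsum_rzeta {r : ℝ} (hr : 1 < r) :
    ∑' n : ℕ, 1 / ((n : ℝ) + 1) ^ r = rzeta r := by
  have h1 : riemannZeta (r : ℂ) = ∑' n : ℕ, 1 / ((n : ℂ) + 1) ^ (r : ℂ) :=
    zeta_eq_tsum_one_div_nat_add_one_cpow (by simpa using hr)
  have h2 : ((∑' n : ℕ, 1 / ((n : ℝ) + 1) ^ r : ℝ) : ℂ) = riemannZeta (r : ℂ) := by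
    rw [Complex.ofReal_tsum, h1]
    refine tsum_congr fun n => ?_
    rw [Complex.ofReal_div, Complex.ofReal_one,
      Complex.ofReal_cpow (by positivity : (0 : ℝ) ≤ (n : ℝ) + 1)]
    push_cast
    ring_nf
  rw [rzeta, ← h2, Complex.ofReal_re]

end Aux

theorem theta_limit_evaluation (r : ℝ) (hr : 1 < r) (x : ℝ) (hx : 0 < x) :
    Filter.Tendsto (fun t : ℝ => Theta (r - 1) 1 (t + r) x)
        (nhdsWithin (1 - r) (Set.Ioi (1 - r)))
        (nhds (Real.eulerMascheroniConstant * rzeta r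
          + ∑' m : ℕ, digamma (((m : ℝ) + 1) / x + 1) / ((m : ℝ) + 1) ^ r))
    ∧ ∑' n : ℕ, ∑' m : ℕ,
        1 / (((n : ℝ) + 1) ^ (r - 1) * ((m : ℝ) + 1) * (((n : ℝ) + 1) + ((m : ℝ) + 1) * x))
      = Real.eulerMascheroniConstant * rzeta r
          + ∑' m : ℕ, digamma (((m : ℝ) + 1) / x + 1) / ((m : ℝ) + 1) ^ r := by
  set γ := Real.eulerMascheroniConstant with hγ
  set f1 : ℕ × ℕ → ℝ := fun p =>
    1 / (((p.1 : ℝ) + 1) ^ (r - 1) * ((p.2 : ℝ) + 1)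
        * (((p.1 : ℝ) + 1) + ((p.2 : ℝ) + 1) * x)) with hf1
  have hnn : ∀ p : ℕ × ℕ, 0 ≤ f1 p := fun p => by
    rw [hf1]; positivity
  have hS : Summable f1 := summable_base hr hx
  have hfib := (summable_prod_of_nonneg hnn).1 hS
  have hzsum : Summable (fun n : ℕ => 1 / ((n : ℝ) + 1) ^ r) := summable_shift hr
  have hinner : Summable (fun n : ℕ => (γ + digamma (((n : ℝ) + 1) / x + 1))
      / ((n : ℝ) + 1) ^ r) := by
    refine hfib.2.congr fun n => ?_
    exact inner_eq hx n
  have hpsisum : Summable (fun n : ℕ =>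
      digamma (((n : ℝ) + 1) / x + 1) / ((n : ℝ) + 1) ^ r) := by
    have h := hinner.sub (hzsum.mul_left γ)
    refine h.congr fun n => ?_
    ring
  have key2 : ∑' n : ℕ, ∑' m : ℕ,
      1 / (((n : ℝ) + 1) ^ (r - 1) * ((m : ℝ) + 1)
          * (((n : ℝ) + 1) + ((m : ℝ) + 1) * x))
      = γ * rzeta r + ∑' m : ℕ, digamma (((m : ℝ) + 1) / x + 1) / ((m : ℝ) + 1) ^ r := by
    calc ∑' n : ℕ, ∑' m : ℕ,
        1 / (((n : ℝ) + 1) ^ (r - 1) * ((m : ℝ) + 1)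
            * (((n : ℝ) + 1) + ((m : ℝ) + 1) * x))
        = ∑' n : ℕ, (γ + digamma (((n : ℝ) + 1) / x + 1)) / ((n : ℝ) + 1) ^ r :=
          tsum_congr fun n => inner_eq hx n
      _ = ∑' n : ℕ, (γ * (1 / ((n : ℝ) + 1) ^ r)
            + digamma (((n : ℝ) + 1) / x + 1) / ((n : ℝ) + 1) ^ r) := by
          refine tsum_congr fun n => ?_
          ring
      _ = γ * ∑' n : ℕ, 1 / ((n : ℝ) + 1) ^ r
            + ∑' n : ℕ, digamma (((n : ℝ) + 1) / x + 1) / ((n : ℝ) + 1) ^ r := by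
          rw [Summable.tsum_add (hzsum.mul_left γ) hpsisum, tsum_mul_left]
      _ = γ * rzeta r
            + ∑' n : ℕ, digamma (((n : ℝ) + 1) / x + 1) / ((n : ℝ) + 1) ^ r := by
          rw [tsum_rzeta hr]
  refine ⟨?_, key2⟩
  -- limit part
  set F : ℝ → ℕ × ℕ → ℝ := fun t p =>
    1 / (((p.1 : ℝ) + 1) ^ (r - 1) * ((p.2 : ℝ) + 1)
        * (((p.1 : ℝ) + 1) + ((p.2 : ℝ) + 1) * x) ^ (t + r)) with hF
  have hFnn : ∀ t, ∀ p : ℕ × ℕ, 0 ≤ F t p := fun t p => by rw [hF]; positivity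
  have hbase1 : ∀ p : ℕ × ℕ, 1 ≤ ((p.1 : ℝ) + 1) + ((p.2 : ℝ) + 1) * x := by
    intro p
    nlinarith [(Nat.cast_nonneg p.1 : (0:ℝ) ≤ (p.1:ℝ)), (Nat.cast_nonneg p.2 : (0:ℝ) ≤ (p.2:ℝ)), hx.le]
  have hFle : ∀ t ∈ Set.Ioi (1 - r), ∀ p : ℕ × ℕ, F t p ≤ f1 p := by
    intro t ht p
    have h1 : (1 : ℝ) ≤ t + r := by
      have := Set.mem_Ioi.mp ht; linarith
    have hb := hbase1 p
    rw [hF, hf1]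
    apply one_div_le_one_div_of_le
    · positivity
    · have h2 : ((p.1 : ℝ) + 1) + ((p.2 : ℝ) + 1) * x
          ≤ (((p.1 : ℝ) + 1) + ((p.2 : ℝ) + 1) * x) ^ (t + r) := by
        calc ((p.1 : ℝ) + 1) + ((p.2 : ℝ) + 1) * x
            = (((p.1 : ℝ) + 1) + ((p.2 : ℝ) + 1) * x) ^ (1 : ℝ) := (Real.rpow_one _).symm
          _ ≤ (((p.1 : ℝ) + 1) + ((p.2 : ℝ) + 1) * x) ^ (t + r) :=
              Real.rpow_le_rpow_of_exponent_le hb h1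
      exact mul_le_mul_of_nonneg_left h2 (by positivity)
  have hlim : ∀ p : ℕ × ℕ, Filter.Tendsto (fun t => F t p)
      (nhdsWithin (1 - r) (Set.Ioi (1 - r))) (nhds (f1 p)) := by
    intro p
    have hb : (0 : ℝ) < ((p.1 : ℝ) + 1) + ((p.2 : ℝ) + 1) * x := by positivity
    have hcb : ContinuousAt (fun t : ℝ =>
        (((p.1 : ℝ) + 1) + ((p.2 : ℝ) + 1) * x) ^ (t + r)) (1 - r) := by
      exact ContinuousAt.rpow continuousAt_const
        ((continuous_id.add continuous_const).continuousAt) (Or.inl hb.ne')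
    have hval : (((p.1 : ℝ) + 1) + ((p.2 : ℝ) + 1) * x) ^ ((1 - r) + r)
        = ((p.1 : ℝ) + 1) + ((p.2 : ℝ) + 1) * x := by
      rw [show (1 - r) + r = (1 : ℝ) by ring, Real.rpow_one]
    have hden : ContinuousAt (fun t : ℝ =>
        ((p.1 : ℝ) + 1) ^ (r - 1) * ((p.2 : ℝ) + 1)
          * ((((p.1 : ℝ) + 1) + ((p.2 : ℝ) + 1) * x) ^ (t + r))) (1 - r) :=
      continuousAt_const.mul hcb
    have hdenne : (((p.1 : ℝ) + 1) ^ (r - 1) * ((p.2 : ℝ) + 1)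
        * ((((p.1 : ℝ) + 1) + ((p.2 : ℝ) + 1) * x) ^ ((1 - r) + r))) ≠ 0 := by
      rw [hval]
      positivity
    have hc : ContinuousAt (fun t => F t p) (1 - r) :=
      ContinuousAt.div continuousAt_const hden hdenne
    have h2 := hc.tendsto.mono_left (nhdsWithin_le_nhds
      (s := Set.Ioi (1 - r)) (a := (1 - r : ℝ)))
    have hFval : F (1 - r) p = f1 p := by
      simp only [hF, hf1]
      rw [hval]
    rw [hFval] at h2
    exact h2
  have hbound : ∀ᶠ t in nhdsWithin (1 - r) (Set.Ioi (1 - r)),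
      ∀ p : ℕ × ℕ, ‖F t p‖ ≤ f1 p := by
    filter_upwards [eventually_mem_nhdsWithin] with t ht p
    rw [Real.norm_eq_abs, abs_of_nonneg (hFnn t p)]
    exact hFle t ht p
  have htend : Filter.Tendsto (fun t => ∑' p : ℕ × ℕ, F t p)
      (nhdsWithin (1 - r) (Set.Ioi (1 - r))) (nhds (∑' p : ℕ × ℕ, f1 p)) :=
    tendsto_tsum_of_dominated_convergence hS hlim hbound
  have hprod1 : ∑' p : ℕ × ℕ, f1 p
      = γ * rzeta r + ∑' m : ℕ, digamma (((m : ℝ) + 1) / x + 1) / ((m : ℝ) + 1) ^ r := by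
    rw [Summable.tsum_prod' hS hfib.1]
    exact key2
  have heq : ∀ t ∈ Set.Ioi (1 - r),
      Theta (r - 1) 1 (t + r) x = ∑' p : ℕ × ℕ, F t p := by
    intro t ht
    have hFt : Summable (F t) :=
      Summable.of_nonneg_of_le (hFnn t) (hFle t ht) hS
    have hFtfib := (summable_prod_of_nonneg (hFnn t)).1 hFt
    rw [Theta, Summable.tsum_prod' hFt hFtfib.1]
    refine tsum_congr fun n => tsum_congr fun m => ?_
    simp only [hF, Real.rpow_one]
  have hEE : (fun t => ∑' p : ℕ × ℕ, F t p)
      =ᶠ[nhdsWithin (1 - r) (Set.Ioi (1 - r))] (fun t => Theta (r - 1) 1 (t + r) x) := by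
    filter_upwards [eventually_mem_nhdsWithin] with t ht
    exact (heq t ht).symm
  have hfinal := htend.congr' hEE
  rwa [hprod1] at hfinal
end

section
/- For natural numbers a, t, r with r ≤ a ≤ r+t-1, r ≥ 1, t ≥ 1, the sum Σ_{j=a-r}^{t-1} C(j+r-1, j) C(j, a-r) equals ((r+t-a)/a) C(r+t-1, t) C(t, a-r). -/
/-!
Write `a = s + r + 1` and `r + 1` for the `r` of the statement. Trading `C(j + r, j) C(j, s)` for
`C(s + r, s) C(j + r, s + r)` pulls the `j`-dependence into a single binomial, and the hockey-stick
identity sums the series to `C(s + r, s) C(t + r, s + r + 1)`. Comparing with the right-hand side is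
then a factorial identity, obtained from `(k + 1) C(n, k + 1) = (n - k) C(n, k)` and
`C(n, k) C(k, s) = C(n, s) C(n - s, k - s)`.
-/

namespace Nat

open Finset

theorem sum_Ico_choose (n k : ℕ) : ∑ i ∈ Ico k n, i.choose k = n.choose (k + 1) := by
  cases n with
  | zero => simp
  | succ n => rw [Ico_add_one_right_eq_Icc, sum_Icc_choose]

theorem add_choose_mul_choose (s r j : ℕ) :
    (j + r).choose j * j.choose s = (s + r).choose s * (j + r).choose (s + r) := by
  rcases lt_or_ge j s with hjs | hsj
  · simp [choose_eq_zero_of_lt hjs, choose_eq_zero_of_lt (by omega : j + r < s + r)]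
  rw [choose_mul hsj, mul_comm ((s + r).choose s), choose_mul (by omega : s ≤ s + r),
    add_tsub_cancel_left, choose_symm_of_eq_add (by omega : j + r - s = j - s + r)]

theorem sum_Ico_add_choose_mul_choose (s r t : ℕ) :
    ∑ j ∈ Ico s t, (j + r).choose j * j.choose s
      = (s + r).choose s * (t + r).choose (s + r + 1) := by
  simp_rw [add_choose_mul_choose s r, ← mul_sum]
  rw [← sum_Ico_choose, ← sum_Ico_add']

theorem succ_mul_add_choose_mul_choose (s r t : ℕ) :
    (s + r + 1) * ((s + r).choose s * (t + r).choose (s + r + 1))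
      = (t - s) * ((t + r).choose t * t.choose s) := by
  rcases lt_or_ge t s with hts | hst
  · rw [choose_eq_zero_of_lt (by omega : t + r < s + r + 1), Nat.sub_eq_zero_of_le hts.le]
    simp
  have hsym : (t + r - s).choose r = (t + r - s).choose (t - s) :=
    choose_symm_of_eq_add (by omega)
  calc (s + r + 1) * ((s + r).choose s * (t + r).choose (s + r + 1))
      = (t + r).choose (s + r) * (t + r - (s + r)) * (s + r).choose s := by
        rw [← choose_succ_right_eq]; ring
    _ = (t - s) * ((t + r).choose t * t.choose s) := by
        rw [mul_right_comm, choose_mul (by omega : s ≤ s + r), choose_mul hst,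
          add_tsub_cancel_left, hsym, (by omega : t + r - (s + r) = t - s)]
        ring

end Nat

theorem binomial_sum_identity_general (a t r : ℕ) (hr : 1 ≤ r) (h1 : r ≤ a)
    (h2 : a ≤ r + t - 1) :
    ∑ j ∈ Finset.Ico (a - r) t, ((j + r - 1).choose j : ℝ) * (j.choose (a - r) : ℝ)
      = (((r : ℝ) + t - a) / a) * ((r + t - 1).choose t : ℝ) * (t.choose (a - r) : ℝ) := by
  obtain ⟨r, rfl⟩ : ∃ r', r = r' + 1 := ⟨r - 1, by omega⟩
  obtain ⟨s, rfl⟩ : ∃ s, a = s + r + 1 := ⟨a - r - 1, by omega⟩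
  have hst : s ≤ t := by omega
  simp only [← add_assoc, add_tsub_cancel_right, (by omega : s + r + 1 - (r + 1) = s),
    (by omega : r + 1 + t - 1 = t + r)]
  have hsum := congrArg (Nat.cast : ℕ → ℝ) (Nat.sum_Ico_add_choose_mul_choose s r t)
  have hclosed := congrArg (Nat.cast : ℕ → ℝ) (Nat.succ_mul_add_choose_mul_choose s r t)
  push_cast [Nat.cast_sub hst] at hsum hclosed
  push_cast
  rw [hsum, (by ring : (r : ℝ) + 1 + t - (s + r + 1) = t - s)]
  field_simp
  linear_combination hclosed

theorem binomial_sum_identity (a t r : ℕ) (hr : 1 ≤ r) (ht : 1 ≤ t) (h1 : r ≤ a)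
    (h2 : a ≤ r + t - 1) :
    ∑ j ∈ Finset.Ico (a - r) t, ((j + r - 1).choose j : ℝ) * (j.choose (a - r) : ℝ)
      = (((r : ℝ) + t - a) / a) * ((r + t - 1).choose t : ℝ) * (t.choose (a - r) : ℝ) :=
  binomial_sum_identity_general a t r hr h1 h2
end

section
/- Let r ∈ ℕ, r ≥ 2, and let Θ be the generalized Mordell–Tornheim zeta function. Then for x > 0 and t > 1 - r, Θ(r,r,t,x) = Θ(0,r,t+r,x) + S(r,t) + x^{-t} Θ(0,r,t+r,1/x), where S(r,t) = (1+(-1)^r) x^{r-1} Θ(r-1,1,t+r,x) + Σ_{ℓ=1}^{r-2} ((-1)^{ℓ+1} + C(r-1,ℓ)) x^ℓ Θ(ℓ+1, r-ℓ, t+r-1, x). -/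
/-!
Multiplying the summand of `Θ(r, r, t, x)` by `((n + m x) / (n + m x)) ^ r` and expanding the
numerator binomially gives `Θ(r, r, t, x) = ∑_{ℓ ≤ r} C(r, ℓ) A ℓ` with
`A ℓ = x^ℓ Θ(ℓ, r - ℓ, t + r, x)`. Here `A 0 = Θ(0, r, t + r, x)`, and
`A r = x^{-t} Θ(0, r, t + r, 1/x)` by the inversion `x ↦ 1/x`, which swaps the two summation
indices. The same expansion with exponent `1` gives
`x^ℓ Θ(ℓ + 1, r - ℓ, t + r - 1, x) = A ℓ + A (ℓ + 1)`, so what remains is an identity between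
binomial coefficients: Pascal's rule `∑ C(r, ℓ) A ℓ = ∑ C(r - 1, ℓ) (A ℓ + A (ℓ + 1))`, and the
alternating sum `∑_{ℓ=1}^{r-2} (-1)^{ℓ+1} (A ℓ + A (ℓ + 1))` telescopes to
`A 1 - (-1)^r A (r - 1)`. All series involved converge absolutely when `t > 1 - r`.
-/

open Real

open Finset

section Algebra

variable {R : Type*} [CommRing R]

lemma sum_range_add_two_eq_add_sum_Icc {M : Type*} [AddCommMonoid M] (g : ℕ → M) (k : ℕ) :
    ∑ i ∈ range (k + 2), g i = g 0 + ∑ i ∈ Icc 1 k, g i + g (k + 1) := by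
  rw [sum_range_succ, range_eq_Ico, sum_eq_sum_Ico_succ_bot (by omega), Ico_add_one_right_eq_Icc]

lemma sum_Icc_neg_one_pow_mul_add (A : ℕ → R) (k : ℕ) :
    ∑ ℓ ∈ Icc 1 k, (-1) ^ (ℓ + 1) * (A ℓ + A (ℓ + 1)) = A 1 - (-1) ^ k * A (k + 1) := by
  induction k with
  | zero => simp
  | succ k ih =>
    rw [sum_Icc_succ_top (by omega), ih]
    ring

lemma sum_range_choose_mul_eq (A : ℕ → R) {r : ℕ} (hr : 2 ≤ r) :
    ∑ ℓ ∈ range (r + 1), (r.choose ℓ : R) * A ℓ =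
      A 0 + ((1 + (-1) ^ r) * A (r - 1)
        + ∑ ℓ ∈ Icc 1 (r - 2), ((-1) ^ (ℓ + 1) + ((r - 1).choose ℓ : R)) * (A ℓ + A (ℓ + 1)))
      + A r := by
  obtain ⟨k, rfl⟩ : ∃ k, r = k + 2 := ⟨r - 2, by omega⟩
  have hpascal := sum_choose_succ_mul (fun i _ ↦ A i) (k + 1)
  simp only [← sum_add_distrib, ← mul_add] at hpascal
  simp only [add_mul, sum_add_distrib, sum_Icc_neg_one_pow_mul_add, hpascal,
    sum_range_add_two_eq_add_sum_Icc, Nat.add_sub_cancel, show k + 2 - 1 = k + 1 by omega,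
    Nat.choose_zero_right, Nat.choose_self, Nat.cast_one]
  ring

end Algebra

noncomputable def thetaSummand (r s t x : ℝ) (p : ℕ × ℕ) : ℝ :=
  1 / (((p.1 : ℝ) + 1) ^ r * ((p.2 : ℝ) + 1) ^ s * (((p.1 : ℝ) + 1) + ((p.2 : ℝ) + 1) * x) ^ t)

section Series

variable {r s t x : ℝ}

lemma Theta_eq_tsum_thetaSummand (h : Summable (thetaSummand r s t x)) :
    Theta r s t x = ∑' p, thetaSummand r s t x p :=
  (h.tsum_prod' h.prod_factor).symm

lemma thetaSummand_nonneg (hx : 0 < x) (p : ℕ × ℕ) : 0 ≤ thetaSummand r s t x p := by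
  unfold thetaSummand
  positivity

lemma summable_add_one_rpow_neg {u : ℝ} (hu : 1 < u) :
    Summable fun n : ℕ ↦ ((n : ℝ) + 1) ^ (-u) := by
  simpa using (summable_nat_add_iff 1).mpr (summable_nat_rpow.mpr (neg_lt_neg hu))

/-- Split `(N + M x) ^ t ≥ N ^ c (M x) ^ (t - c)` and compare with a product of two `p`-series. -/
lemma summable_thetaSummand_of_le (hx : 0 < x) {c : ℝ} (hc : 0 ≤ c) (hct : c ≤ t)
    (hrc : 1 < r + c) (hsc : 1 < s + (t - c)) : Summable (thetaSummand r s t x) := by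
  have hprod : Summable (fun p : ℕ × ℕ ↦
      ((p.1 : ℝ) + 1) ^ (-(r + c)) * (((p.2 : ℝ) + 1) ^ (-(s + (t - c))) * x ^ (-(t - c)))) :=
    (summable_add_one_rpow_neg hrc).mul_of_nonneg
      ((summable_add_one_rpow_neg hsc).mul_right _) (fun _ ↦ by positivity) (fun _ ↦ by positivity)
  refine hprod.of_nonneg_of_le (thetaSummand_nonneg hx) fun ⟨n, m⟩ ↦ ?_
  set N : ℝ := n + 1
  set M : ℝ := m + 1
  have hN : 0 < N := by positivity
  have hM : 0 < M := by positivity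
  have hB : 0 < N + M * x := by positivity
  have hNB : N ^ c ≤ (N + M * x) ^ c := by gcongr; linarith [mul_pos hM hx]
  have hMB : (M * x) ^ (t - c) ≤ (N + M * x) ^ (t - c) := by gcongr; linarith
  have key : N ^ (r + c) * (M ^ (s + (t - c)) * x ^ (t - c)) ≤ N ^ r * M ^ s * (N + M * x) ^ t :=
    calc N ^ (r + c) * (M ^ (s + (t - c)) * x ^ (t - c))
        = (N ^ r * M ^ s) * (N ^ c * (M * x) ^ (t - c)) := by
          rw [rpow_add hN, rpow_add hM, mul_rpow hM.le hx.le]; ring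
      _ ≤ (N ^ r * M ^ s) * ((N + M * x) ^ c * (N + M * x) ^ (t - c)) := by gcongr
      _ = N ^ r * M ^ s * (N + M * x) ^ t := by rw [← rpow_add hB, add_sub_cancel]
  calc thetaSummand r s t x (n, m) = 1 / (N ^ r * M ^ s * (N + M * x) ^ t) := rfl
    _ ≤ 1 / (N ^ (r + c) * (M ^ (s + (t - c)) * x ^ (t - c))) := by gcongr
    _ = N ^ (-(r + c)) * (M ^ (-(s + (t - c))) * x ^ (-(t - c))) := by
        rw [rpow_neg hN.le, rpow_neg hM.le, rpow_neg hx.le, one_div, mul_inv, mul_inv]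

lemma summable_thetaSummand (hx : 0 < x) (ht : 0 ≤ t) (hrt : 1 < r + t) (hst : 1 < s + t)
    (hrst : 2 < r + s + t) : Summable (thetaSummand r s t x) := by
  apply summable_thetaSummand_of_le hx (c := (t + min s 1 - min r 1) / 2) <;>
  rcases min_cases r 1 with ⟨hr, _⟩ | ⟨hr, _⟩ <;>
  rcases min_cases s 1 with ⟨hs, _⟩ | ⟨hs, _⟩ <;> rw [hr, hs] <;> linarith

/-- Expand `1 = ((N + M x) / (N + M x)) ^ n` by the binomial theorem. -/
lemma thetaSummand_eq_sum_choose (hx : 0 < x) (n : ℕ) (p : ℕ × ℕ) :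
    thetaSummand r s t x p = ∑ ℓ ∈ range (n + 1),
      (n.choose ℓ : ℝ) * x ^ ℓ * thetaSummand (r - n + ℓ) (s - ℓ) (t + n) x p := by
  set N : ℝ := p.1 + 1
  set M : ℝ := p.2 + 1
  have hN : 0 < N := by positivity
  have hM : 0 < M := by positivity
  have hB : 0 < N + M * x := by positivity
  have hterm : ∀ ℓ ∈ range (n + 1),
      (n.choose ℓ : ℝ) * x ^ ℓ * thetaSummand (r - n + ℓ) (s - ℓ) (t + n) x p
        = (M * x) ^ ℓ * N ^ (n - ℓ) * n.choose ℓ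
          / (N ^ r * M ^ s * (N + M * x) ^ t * (N + M * x) ^ n) := by
    intro ℓ hℓ
    have hℓn : ℓ ≤ n := Nat.lt_succ_iff.mp (mem_range.mp hℓ)
    have hNexp : r - n + ℓ = r - ((n - ℓ : ℕ) : ℝ) := by rw [Nat.cast_sub hℓn]; ring
    simp only [thetaSummand]
    rw [hNexp, rpow_sub hN, rpow_sub hM, rpow_add hB, rpow_natCast, rpow_natCast, rpow_natCast,
      mul_pow]
    field_simp
  rw [sum_congr rfl hterm, ← sum_div, ← add_pow, add_comm (M * x)]
  change 1 / (N ^ r * M ^ s * (N + M * x) ^ t) = _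
  field_simp

lemma Theta_eq_sum_choose (hx : 0 < x) (n : ℕ)
    (hsum : ∀ ℓ ∈ range (n + 1), Summable (thetaSummand (r - n + ℓ) (s - ℓ) (t + n) x)) :
    Theta r s t x = ∑ ℓ ∈ range (n + 1),
      (n.choose ℓ : ℝ) * x ^ ℓ * Theta (r - n + ℓ) (s - ℓ) (t + n) x := by
  have hexpand := funext (thetaSummand_eq_sum_choose (r := r) (s := s) (t := t) hx n)
  have hsum' : ∀ ℓ ∈ range (n + 1), Summable fun p ↦
      (n.choose ℓ : ℝ) * x ^ ℓ * thetaSummand (r - n + ℓ) (s - ℓ) (t + n) x p :=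
    fun ℓ hℓ ↦ (hsum ℓ hℓ).mul_left _
  rw [Theta_eq_tsum_thetaSummand (hexpand ▸ summable_sum hsum'), hexpand,
    Summable.tsum_finsetSum hsum']
  refine sum_congr rfl fun ℓ hℓ ↦ ?_
  rw [tsum_mul_left, Theta_eq_tsum_thetaSummand (hsum ℓ hℓ)]

lemma Theta_add_one (hx : 0 < x) (h₀ : Summable (thetaSummand r s (t + 1) x))
    (h₁ : Summable (thetaSummand (r + 1) (s - 1) (t + 1) x)) :
    Theta (r + 1) s t x = Theta r s (t + 1) x + x * Theta (r + 1) (s - 1) (t + 1) x := by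
  have hsum : ∀ ℓ ∈ range (1 + 1),
      Summable (thetaSummand (r + 1 - (1 : ℕ) + ℓ) (s - ℓ) (t + (1 : ℕ)) x) := by
    simp only [mem_range, Nat.lt_succ_iff, Nat.le_one_iff_eq_zero_or_eq_one]
    rintro ℓ (rfl | rfl) <;> simpa
  simpa [sum_range_succ] using Theta_eq_sum_choose hx 1 hsum

lemma thetaSummand_inv_swap (hx : 0 < x) (p : ℕ × ℕ) :
    thetaSummand s r t x⁻¹ p.swap = x ^ t * thetaSummand r s t x p := by
  simp only [thetaSummand, Prod.fst_swap, Prod.snd_swap]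
  have hB : ((p.2 : ℝ) + 1) + ((p.1 : ℝ) + 1) * x⁻¹ = ((p.1 + 1) + (p.2 + 1) * x) / x := by
    field_simp; ring
  rw [hB, div_rpow (by positivity) hx.le]
  field_simp

lemma Theta_eq_rpow_neg_mul_Theta_inv (hx : 0 < x) (h : Summable (thetaSummand r s t x)) :
    Theta r s t x = x ^ (-t) * Theta s r t x⁻¹ := by
  have hinv : thetaSummand s r t x⁻¹ =
      fun q ↦ x ^ t * thetaSummand r s t x (Equiv.prodComm ℕ ℕ q) := by
    ext q; simpa using thetaSummand_inv_swap (r := r) (s := s) (t := t) hx q.swap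
  have hsum : Summable (thetaSummand s r t x⁻¹) := by
    rw [hinv]; exact ((Equiv.prodComm ℕ ℕ).summable_iff.mpr h).mul_left _
  rw [Theta_eq_tsum_thetaSummand hsum, hinv, tsum_mul_left,
    (Equiv.prodComm ℕ ℕ).tsum_eq (thetaSummand r s t x), ← mul_assoc, ← rpow_add hx,
    neg_add_cancel, rpow_zero, one_mul, Theta_eq_tsum_thetaSummand h]

end Series

noncomputable def weightedTheta (r : ℕ) (t x : ℝ) (ℓ : ℕ) : ℝ :=
  x ^ ℓ * Theta ℓ (r - ℓ) (t + r) x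

section Weighted

variable {r : ℕ} {t x : ℝ}

lemma summable_thetaSummand_weighted (hx : 0 < x) (hr : 1 ≤ r) (ht : 1 - r < t) {ℓ : ℕ}
    (hℓ : ℓ ≤ r) : Summable (thetaSummand ℓ (r - ℓ) (t + r) x) := by
  have hr' : (1 : ℝ) ≤ r := by exact_mod_cast hr
  have hℓ' : (ℓ : ℝ) ≤ r := by exact_mod_cast hℓ
  exact summable_thetaSummand hx (by linarith) (by linarith [ℓ.cast_nonneg (α := ℝ)])
    (by linarith) (by linarith)

lemma Theta_eq_sum_choose_mul_weightedTheta (hx : 0 < x)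
    (hsum : ∀ ℓ ≤ r, Summable (thetaSummand ℓ (r - ℓ) (t + r) x)) :
    Theta r r t x = ∑ ℓ ∈ range (r + 1), (r.choose ℓ : ℝ) * weightedTheta r t x ℓ := by
  rw [Theta_eq_sum_choose hx r fun ℓ hℓ ↦ by
    simpa using hsum ℓ (Nat.lt_succ_iff.mp (mem_range.mp hℓ))]
  simp [weightedTheta, mul_assoc]

lemma pow_mul_Theta_eq_weightedTheta_add (hx : 0 < x)
    (hsum : ∀ ℓ ≤ r, Summable (thetaSummand ℓ (r - ℓ) (t + r) x)) {ℓ : ℕ} (hℓ : ℓ + 1 ≤ r) :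
    x ^ ℓ * Theta ((ℓ : ℝ) + 1) ((r : ℝ) - ℓ) (t + r - 1) x =
      weightedTheta r t x ℓ + weightedTheta r t x (ℓ + 1) := by
  have h₁ := hsum (ℓ + 1) hℓ
  push_cast at h₁
  rw [Theta_add_one hx (by simpa using hsum ℓ (by omega)) (by simpa [sub_sub] using h₁),
    sub_add_cancel]
  simp only [weightedTheta, Nat.cast_add, Nat.cast_one, ← sub_sub, pow_succ]
  ring

lemma weightedTheta_zero : weightedTheta r t x 0 = Theta 0 r (t + r) x := by
  simp [weightedTheta]

lemma weightedTheta_sub_one (hr : 1 ≤ r) :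
    weightedTheta r t x (r - 1) = x ^ (r - 1) * Theta ((r : ℝ) - 1) 1 (t + r) x := by
  simp [weightedTheta, Nat.cast_sub hr]

lemma weightedTheta_self (hx : 0 < x) (h : Summable (thetaSummand r 0 (t + r) x)) :
    weightedTheta r t x r = x ^ (-t) * Theta 0 r (t + r) (1 / x) := by
  rw [weightedTheta, sub_self, Theta_eq_rpow_neg_mul_Theta_inv hx h, ← mul_assoc, ← rpow_natCast,
    ← rpow_add hx, show (r : ℝ) + -(t + r) = -t by ring, one_div]

end Weighted

theorem theta_rr_decomposition (r : ℕ) (hr : 2 ≤ r) (x : ℝ) (hx : 0 < x)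
    (t : ℝ) (ht : 1 - r < t) :
    Theta r r t x =
      Theta 0 r (t + r) x
      + ((1 + (-1 : ℝ) ^ r) * x ^ (r - 1) * Theta ((r : ℝ) - 1) 1 (t + r) x
          + ∑ ℓ ∈ Finset.Icc 1 (r - 2),
              ((-1 : ℝ) ^ (ℓ + 1) + ((r - 1).choose ℓ : ℝ)) * x ^ ℓ
                * Theta ((ℓ : ℝ) + 1) ((r : ℝ) - ℓ) (t + r - 1) x)
      + x ^ (-t) * Theta 0 r (t + r) (1 / x) := by
  have hsum : ∀ ℓ ≤ r, Summable (thetaSummand ℓ (r - ℓ) (t + r) x) :=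
    fun ℓ hℓ ↦ summable_thetaSummand_weighted hx (by omega) ht hℓ
  have hmiddle : ∑ ℓ ∈ Icc 1 (r - 2), ((-1 : ℝ) ^ (ℓ + 1) + ((r - 1).choose ℓ : ℝ)) * x ^ ℓ
        * Theta ((ℓ : ℝ) + 1) ((r : ℝ) - ℓ) (t + r - 1) x
      = ∑ ℓ ∈ Icc 1 (r - 2), ((-1 : ℝ) ^ (ℓ + 1) + ((r - 1).choose ℓ : ℝ))
        * (weightedTheta r t x ℓ + weightedTheta r t x (ℓ + 1)) :=
    sum_congr rfl fun ℓ hℓ ↦ by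
      rw [mul_assoc, pow_mul_Theta_eq_weightedTheta_add hx hsum (by grind)]
  have hlast := weightedTheta_self hx (by simpa using hsum r le_rfl)
  rw [Theta_eq_sum_choose_mul_weightedTheta hx hsum, sum_range_choose_mul_eq _ hr,
    weightedTheta_zero, weightedTheta_sub_one (by omega), hlast, hmiddle]
  ring
end

section
/- For Re(t) > 1, x > 0, and r real with r + t > 1, the integral ∫_0^∞ y^{t-1} e^{-xy} Li_r(e^{-y}) dy equals Γ(t) Σ_{n=1}^{∞} 1/(n^r (x+n)^t), where Li_r(z) = Σ_{u=1}^{∞} z^u/u^r is the polylogarithm. -/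
open Real

/-- The polylogarithm `Li_r(z) = ∑_{u≥1} z^u / u^r`. -/
noncomputable def polylog (r : ℝ) (z : ℝ) : ℝ := ∑' u : ℕ, z ^ (u + 1) / ((u : ℝ) + 1) ^ r

/-!
Expanding `e^{-xy} Li_r(e^{-y}) = ∑_{n ≥ 1} n^{-r} e^{-(x+n)y}` turns the integral into a sum of
Gamma integrals `∫_0^∞ y^{t-1} e^{-(x+n)y} dy = Γ(t) (x+n)^{-t}`. Sum and integral may be
interchanged because the integrals of the absolute values are summable:
`∑ n^{-r} (x+n)^{-t} ≤ ∑ n^{-(r+t)} < ∞`.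
-/

open MeasureTheory Set

lemma integrableOn_rpow_mul_const_mul_exp_neg_mul {s p : ℝ} (hs : 0 < s) (hp : 0 < p) (c : ℝ) :
    IntegrableOn (fun y : ℝ ↦ y ^ (s - 1) * (c * exp (-(p * y)))) (Ioi 0) := by
  have h := integrableOn_rpow_mul_exp_neg_mul_rpow (s := s - 1) (by linarith) one_pos hp
  simp only [rpow_one, neg_mul] at h
  simp only [mul_left_comm _ c]
  exact h.const_mul c

lemma integral_rpow_mul_const_mul_exp_neg_mul {s p : ℝ} (hs : 0 < s) (hp : 0 < p) (c : ℝ) :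
    ∫ y in Ioi 0, y ^ (s - 1) * (c * exp (-(p * y))) = Gamma s * (c / p ^ s) := by
  simp only [mul_left_comm _ c]
  rw [integral_const_mul, integral_rpow_mul_exp_neg_mul_Ioi hs hp, one_div,
    inv_rpow hp.le]
  ring

/-- Real analogue of `hasSum_mellin`; no pointwise summability of the series is needed. -/
lemma integral_rpow_mul_tsum_exp_neg_mul {a p : ℕ → ℝ} {s : ℝ} (hp : ∀ n, 0 < p n)
    (hs : 0 < s) (h_sum : Summable fun n ↦ |a n| / p n ^ s) :
    ∫ y in Ioi 0, y ^ (s - 1) * ∑' n, a n * exp (-(p n * y))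
      = Gamma s * ∑' n, a n / p n ^ s := by
  have h_norm : ∀ n, ∫ y in Ioi 0, ‖y ^ (s - 1) * (a n * exp (-(p n * y)))‖
      = Gamma s * (|a n| / p n ^ s) := fun n ↦ by
    rw [← integral_rpow_mul_const_mul_exp_neg_mul hs (hp n)]
    refine setIntegral_congr_fun measurableSet_Ioi fun y (hy : 0 < y) ↦ ?_
    rw [norm_mul, norm_mul, Real.norm_of_nonneg (rpow_nonneg hy.le _), Real.norm_eq_abs,
      Real.norm_of_nonneg (exp_pos _).le]
  calc ∫ y in Ioi 0, y ^ (s - 1) * ∑' n, a n * exp (-(p n * y))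
      = ∫ y in Ioi 0, ∑' n, y ^ (s - 1) * (a n * exp (-(p n * y))) := by
        simp_rw [tsum_mul_left]
    _ = ∑' n, ∫ y in Ioi 0, y ^ (s - 1) * (a n * exp (-(p n * y))) :=
        (integral_tsum_of_summable_integral_norm
          (fun n ↦ integrableOn_rpow_mul_const_mul_exp_neg_mul hs (hp n) (a n))
          (by simpa only [h_norm] using h_sum.mul_left (Gamma s))).symm
    _ = Gamma s * ∑' n, a n / p n ^ s := by
        simp_rw [integral_rpow_mul_const_mul_exp_neg_mul hs (hp _), tsum_mul_left]

lemma exp_neg_mul_mul_polylog_exp_neg (r x y : ℝ) :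
    exp (-x * y) * polylog r (exp (-y))
      = ∑' n : ℕ, 1 / ((n : ℝ) + 1) ^ r * exp (-((x + ((n : ℝ) + 1)) * y)) := by
  rw [polylog, ← tsum_mul_left]
  refine tsum_congr fun n ↦ ?_
  have h_exp : exp (-((x + ((n : ℝ) + 1)) * y)) = exp (-x * y) * exp (-y) ^ (n + 1) := by
    rw [← exp_nat_mul, ← exp_add]
    push_cast
    ring_nf
  rw [h_exp]
  ring

lemma summable_one_div_rpow_div_add_rpow {x r t : ℝ} (hx : 0 ≤ x) (ht : 0 ≤ t)
    (hrt : 1 < r + t) :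
    Summable fun n : ℕ ↦ 1 / ((n : ℝ) + 1) ^ r / (x + ((n : ℝ) + 1)) ^ t := by
  have h_pseries : Summable fun n : ℕ ↦ 1 / ((n : ℝ) + 1) ^ (r + t) := by
    simpa using (summable_nat_add_iff 1).mpr (summable_one_div_nat_rpow.mpr hrt)
  refine h_pseries.of_nonneg_of_le (fun n ↦ by positivity) fun n ↦ ?_
  have hn : (0 : ℝ) < (n : ℝ) + 1 := by positivity
  rw [div_div, rpow_add hn]
  gcongr 1 / (_ * ?_)
  exact rpow_le_rpow hn.le (by linarith) ht

open MeasureTheory in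
theorem polylog_integral (t : ℝ) (ht : 1 < t) (x : ℝ) (hx : 0 < x) (r : ℝ)
    (hrt : 1 < r + t) :
    ∫ y in Set.Ioi (0 : ℝ), y ^ (t - 1) * Real.exp (-x * y) * polylog r (Real.exp (-y))
      = Real.Gamma t * ∑' n : ℕ, 1 / (((n : ℝ) + 1) ^ r * (x + ((n : ℝ) + 1)) ^ t) := by
  have hp (n : ℕ) : 0 < x + ((n : ℝ) + 1) := by positivity
  have h_sum : Summable fun n : ℕ ↦ |1 / ((n : ℝ) + 1) ^ r| / (x + ((n : ℝ) + 1)) ^ t := by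
    simpa only [abs_of_nonneg (one_div_nonneg.mpr (rpow_nonneg (Nat.cast_add_one_pos _).le r))]
      using summable_one_div_rpow_div_add_rpow hx.le (by linarith) hrt
  simp_rw [mul_assoc, exp_neg_mul_mul_polylog_exp_neg, ← div_div]
  exact integral_rpow_mul_tsum_exp_neg_mul hp (by linarith) h_sum
end
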